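/- arXiv:1305.0433 — 3 statements merged into one kernel-verified Lean document; each statement's English description precedes it below -/
import Mathlib

section
/- Let Q=(τ−,L^C,X^C,R^C,τ+) be a valid quintuple for a graph G with vertex cover C, and let (P,𝒳) be a nice path decomposition of G respecting Q. Then (P,𝒳) has a bag of size at least |X^C|+|XTR^S(Q)|+ε(Q). -/
open scoped Classical

noncomputable section

/-- Operations labelling the nodes of a nice tree decomposition.  For a `join`
we record the trace of the bag on the vertex cover together with the traces of
the lower sets of the two children. -/
inductive TDOp (V : Type) where
  | introduce (u : V)
  | forget (u : V)
  | join (X L1 L2 : Set V)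

/-- `i` is an ancestor of `j` (inclusively) with respect to the parent function `parent`. -/
def ancestorOf {ι : Type} (parent : ι → ι) (i j : ι) : Prop :=
  ∃ n : ℕ, parent^[n] j = i

/-- `k` lies on the unique tree path between `i` and `j` in the rooted tree given by `parent`. -/
def betweenNodes {ι : Type} (parent : ι → ι) (k i j : ι) : Prop :=
  (ancestorOf parent k i ∨ ancestorOf parent k j) ∧
    ∀ l, ancestorOf parent l i → ancestorOf parent l j → ancestorOf parent l k

/-- A rooted tree decomposition of a graph `G`, encoded via a parent function on the
node set `ι`:  every node reaches the root by iterating `parent`; the bags cover the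
vertices and the edges, and the set of bags containing a fixed vertex is connected
(it is closed under taking nodes on tree paths). -/
structure RootedTreeDecomp (V ι : Type) (G : SimpleGraph V) where
  root : ι
  parent : ι → ι
  parent_root : parent root = root
  reaches_root : ∀ i, ancestorOf parent root i
  bag : ι → Finset V
  bag_cover : ∀ v, ∃ i, v ∈ bag i
  bag_edge : ∀ u v, G.Adj u v → ∃ i, u ∈ bag i ∧ v ∈ bag i
  bag_conn : ∀ v i j k, v ∈ bag i → v ∈ bag j → betweenNodes parent k i j → v ∈ bag k

namespace RootedTreeDecomp

variable {V ι : Type} {G : SimpleGraph V} (t : RootedTreeDecomp V ι G)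

/-- `i` is an ancestor of `j` (inclusively). -/
def anc (i j : ι) : Prop := ancestorOf t.parent i j

/-- `V_i` : the union of the bags of the subtree rooted at `i`. -/
def subVerts (i : ι) : Set V := {v | ∃ j, t.anc i j ∧ v ∈ t.bag j}

/-- `L_i = V_i ∖ X_i`. -/
def Lset (i : ι) : Set V := t.subVerts i \ ↑(t.bag i)

/-- `R_i = V ∖ V_i`. -/
def Rset (i : ι) : Set V := Set.univ \ t.subVerts i

/-- The trace of node `i` on `C` is the three-partition `(L_i ∩ C, X_i ∩ C, R_i ∩ C)` of `C`. -/
def HasTrace (C : Set V) (i : ι) (LC XC RC : Set V) : Prop :=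
  LC = t.Lset i ∩ C ∧ XC = (↑(t.bag i) : Set V) ∩ C ∧ RC = t.Rset i ∩ C

/-- The children of a node. -/
def children (i : ι) : Set ι := {j | j ≠ t.root ∧ t.parent j = i}

/-- A leaf node: no children and a bag of size one. -/
def IsLeafNode (i : ι) : Prop := t.children i = ∅ ∧ ∃ u, t.bag i = {u}

/-- An introduce node. -/
def IsIntroduceNode [DecidableEq V] (i : ι) : Prop :=
  ∃ j u, t.children i = {j} ∧ u ∉ t.bag j ∧ t.bag i = insert u (t.bag j)

/-- A forget node. -/
def IsForgetNode [DecidableEq V] (i : ι) : Prop :=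
  ∃ j u, t.children i = {j} ∧ u ∈ t.bag j ∧ t.bag i = (t.bag j).erase u

/-- A join node. -/
def IsJoinNode (i : ι) : Prop :=
  ∃ j k, j ≠ k ∧ t.children i = ({j, k} : Set ι) ∧ t.bag j = t.bag i ∧ t.bag k = t.bag i

/-- A nice tree decomposition: every node is a leaf, introduce, forget or join node. -/
def IsNice [DecidableEq V] : Prop :=
  ∀ i, t.IsLeafNode i ∨ t.IsIntroduceNode i ∨ t.IsForgetNode i ∨ t.IsJoinNode i

/-- A nice path decomposition: every node is a leaf, introduce or forget node. -/
def IsNicePath [DecidableEq V] : Prop :=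
  ∀ i, t.IsLeafNode i ∨ t.IsIntroduceNode i ∨ t.IsForgetNode i

/-- The operation `op` is the operation `τ_i` performed at node `i`
(join operations are recorded through their traces on the vertex cover `C`). -/
def HasOp [DecidableEq V] (C : Set V) (i : ι) : TDOp V → Prop
  | TDOp.introduce u =>
      (t.children i = ∅ ∧ t.bag i = {u}) ∨
        ∃ j, t.children i = {j} ∧ u ∉ t.bag j ∧ t.bag i = insert u (t.bag j)
  | TDOp.forget u =>
      ∃ j, t.children i = {j} ∧ u ∈ t.bag j ∧ t.bag i = (t.bag j).erase u
  | TDOp.join X L1 L2 =>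
      ∃ j k, j ≠ k ∧ t.children i = ({j, k} : Set ι) ∧ t.bag j = t.bag i ∧ t.bag k = t.bag i ∧
        X = (↑(t.bag i) : Set V) ∩ C ∧ L1 = t.Lset j ∩ C ∧ L2 = t.Lset k ∩ C

/-- The width of a rooted tree decomposition: maximum bag size minus one. -/
def width [Fintype ι] : ℕ := (Finset.univ.sup fun i => (t.bag i).card) - 1

end RootedTreeDecomp

/-- A quintuple `(τ₋, L^C, X^C, R^C, τ₊)`. -/
structure TDQuint (V : Type) where
  tauL : TDOp V
  LC : Set V
  XC : Set V
  RC : Set V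
  tauR : TDOp V

/-- `C` is a vertex cover of `G`. -/
def IsVertexCover {V : Type} (G : SimpleGraph V) (C : Set V) : Prop :=
  ∀ u v, G.Adj u v → u ∈ C ∨ v ∈ C

/-- `X` separates `A` from `B` in the subgraph of `G` induced by `D`: there is no walk
between a vertex of `A` and a vertex of `B` all of whose vertices avoid `X` and stay in `D`. -/
def SeparatesIn {V : Type} (G : SimpleGraph V) (D X A B : Set V) : Prop :=
  ∀ a ∈ A, ∀ b ∈ B, ¬ ∃ p : G.Walk a b, ∀ v ∈ p.support, v ∈ D \ X

/-- `(LC, XC, RC)` is a valid partition of `C`: it is the trace on `C` of some node of some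
rooted tree decomposition of `G`. -/
def ValidPartition {V : Type} (G : SimpleGraph V) (C LC XC RC : Set V) : Prop :=
  ∃ (ι : Type) (t : RootedTreeDecomp V ι G) (i : ι), t.HasTrace C i LC XC RC

section

variable {V ι : Type} [DecidableEq V] {G : SimpleGraph V}

/-- The decomposition `t` respects the (non-degenerate) quintuple `Q`, with `imin` and `imax`
as lowest and highest nodes of the subpath of nodes whose trace on `C` is `(LC, XC, RC)`:
the operation at `imin` is `τ₋`, and the operation at the father of `imax` is `τ₊`
(taken to be `forget w` on the root bag `{w}` when `imax` is the root). -/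
def RespectsAtND (t : RootedTreeDecomp V ι G) (C : Set V) (Q : TDQuint V)
    (imin imax : ι) : Prop :=
  t.HasTrace C imin Q.LC Q.XC Q.RC ∧ t.HasTrace C imax Q.LC Q.XC Q.RC ∧ t.anc imax imin ∧
    (∀ i, t.HasTrace C i Q.LC Q.XC Q.RC → t.anc i imin ∧ t.anc imax i) ∧
    t.HasOp C imin Q.tauL ∧
    ((imax = t.root ∧ ∃ w, t.bag t.root = {w} ∧ Q.tauR = TDOp.forget w) ∨
      (imax ≠ t.root ∧ t.HasOp C (t.parent imax) Q.tauR))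

/-- The decomposition `t` respects the degenerate quintuple `Q` at node `i`: node `i` has
trace `(∅, XC, RC)` on `C` and its father performs the forget operation `τ₊`. -/
def RespectsAtDeg (t : RootedTreeDecomp V ι G) (C : Set V) (Q : TDQuint V) (i : ι) : Prop :=
  t.HasTrace C i Q.LC Q.XC Q.RC ∧
    ∃ u, Q.tauR = TDOp.forget u ∧ i ≠ t.root ∧ t.HasOp C (t.parent i) (TDOp.forget u)

/-- The decomposition `t` respects the quintuple `Q`, witnessed by the nodes `imin`, `imax`. -/
def RespectsAt (t : RootedTreeDecomp V ι G) (C : Set V) (Q : TDQuint V)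
    (imin imax : ι) : Prop :=
  (Q.LC ≠ ∅ ∧ RespectsAtND t C Q imin imax) ∨
    (Q.LC = ∅ ∧ imin = imax ∧ RespectsAtDeg t C Q imax)

/-- The decomposition `t` respects the quintuple `Q`. -/
def Respects (t : RootedTreeDecomp V ι G) (C : Set V) (Q : TDQuint V) : Prop :=
  ∃ imin imax, RespectsAt t C Q imin imax

end

/-- Valid quintuples (tree-decomposition version), including the degenerate ones. -/
def ValidQuintT {V : Type} [DecidableEq V] (G : SimpleGraph V) (C : Set V)
    (Q : TDQuint V) : Prop :=
  (Q.LC ≠ ∅ ∧ ∃ (ι : Type) (t : RootedTreeDecomp V ι G), t.IsNice ∧ Respects t C Q) ∨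
    (Q.LC = ∅ ∧ ValidPartition G C ∅ Q.XC Q.RC ∧
      ∃ u, u ∈ Q.XC ∧ G.neighborSet u ⊆ Q.XC ∧ Q.tauR = TDOp.forget u)

/-- Valid quintuples (path-decomposition version): `Q` is respected by some nice path
decomposition of `G`. -/
def ValidQuintP {V : Type} [DecidableEq V] (G : SimpleGraph V) (C : Set V)
    (Q : TDQuint V) : Prop :=
  ∃ (ι : Type) (t : RootedTreeDecomp V ι G), t.IsNicePath ∧
    ∃ imin imax, RespectsAtND t C Q imin imax

section

variable {V : Type} [DecidableEq V]

/-- `XTR^S(Q)`: vertices of `S = V ∖ C` having neighbours in both `L^C` and `R^C`. -/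
def XTRset (G : SimpleGraph V) (C : Set V) (Q : TDQuint V) : Set V :=
  {x | x ∉ C ∧ (G.neighborSet x ∩ Q.LC).Nonempty ∧ (G.neighborSet x ∩ Q.RC).Nonempty}

/-- `XL^S(Q)`. -/
def XLset (G : SimpleGraph V) (C : Set V) (Q : TDQuint V) : Set V :=
  match Q.tauL with
  | TDOp.introduce u =>
      {x | x ∉ C ∧ G.neighborSet x ⊆ Q.LC ∪ Q.XC ∧ u ∈ G.neighborSet x ∧
        (G.neighborSet x ∩ Q.LC).Nonempty}
  | TDOp.forget _ => ∅
  | TDOp.join _ L1 L2 =>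
      {x | x ∉ C ∧ (G.neighborSet x ∩ L1).Nonempty ∧ (G.neighborSet x ∩ L2).Nonempty ∧
        G.neighborSet x ∩ Q.RC = ∅}

/-- `XR^S(Q)`. -/
def XRset (G : SimpleGraph V) (C : Set V) (Q : TDQuint V) : Set V :=
  match Q.tauR with
  | TDOp.forget v =>
      {x | x ∉ C ∧ G.neighborSet x ⊆ Q.RC ∪ Q.XC ∧ v ∈ G.neighborSet x ∧
        (G.neighborSet x ∩ Q.RC).Nonempty}
  | _ => ∅

/-- `ε(Q)` (treewidth version): `1` if some vertex of `S` has neighbourhood exactly `X^C`. -/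
def epsT (G : SimpleGraph V) (C : Set V) (Q : TDQuint V) : ℕ :=
  if ∃ x, x ∉ C ∧ G.neighborSet x = Q.XC then 1 else 0

/-- The local treewidth of a quintuple. -/
def loctw (G : SimpleGraph V) (C : Set V) (Q : TDQuint V) : ℕ :=
  Q.XC.ncard +
    max (max ((XTRset G C Q).ncard + (XLset G C Q).ncard)
      ((XTRset G C Q).ncard + (XRset G C Q).ncard)) (epsT G C Q) - 1

/-- Fuelled version of the partial treewidth recursion. -/
def ptwAux (G : SimpleGraph V) (C : Set V) : ℕ → TDQuint V → ℕ
  | 0, Q => loctw G C Q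
  | m + 1, Q =>
    if Q.LC = ∅ then loctw G C Q
    else
      match Q.tauL with
      | TDOp.introduce u =>
          max (loctw G C Q)
            (sInf {n | ∃ τ,
              ValidQuintT G C ⟨τ, Q.LC, Q.XC \ {u}, Q.RC ∪ {u}, TDOp.introduce u⟩ ∧
              n = ptwAux G C m ⟨τ, Q.LC, Q.XC \ {u}, Q.RC ∪ {u}, TDOp.introduce u⟩})
      | TDOp.forget u =>
          max (loctw G C Q)
            (sInf {n | ∃ τ,
              ValidQuintT G C ⟨τ, Q.LC \ {u}, Q.XC ∪ {u}, Q.RC, TDOp.forget u⟩ ∧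
              n = ptwAux G C m ⟨τ, Q.LC \ {u}, Q.XC ∪ {u}, Q.RC, TDOp.forget u⟩})
      | TDOp.join _ L1 L2 =>
          max (loctw G C Q)
            (max
              (sInf {n | ∃ τ,
                ValidQuintT G C ⟨τ, L1, Q.XC, Q.RC ∪ L2, TDOp.join Q.XC L1 L2⟩ ∧
                n = ptwAux G C m ⟨τ, L1, Q.XC, Q.RC ∪ L2, TDOp.join Q.XC L1 L2⟩})
              (sInf {n | ∃ τ,
                ValidQuintT G C ⟨τ, L2, Q.XC, Q.RC ∪ L1, TDOp.join Q.XC L1 L2⟩ ∧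
                n = ptwAux G C m ⟨τ, L2, Q.XC, Q.RC ∪ L1, TDOp.join Q.XC L1 L2⟩}))

/-- The partial treewidth `ptw(Q)` of a quintuple (defined with sufficient fuel:
each recursive step strictly decreases `2·|L^C| + |X^C|`). -/
def ptw (G : SimpleGraph V) (C : Set V) (Q : TDQuint V) : ℕ :=
  ptwAux G C (2 * Q.LC.ncard + Q.XC.ncard) Q

/-- `X^C_-` : the bag trace just below `imin`. -/
def XCminus (Q : TDQuint V) : Set V :=
  match Q.tauL with
  | TDOp.introduce u => Q.XC \ {u}
  | TDOp.forget u => Q.XC ∪ {u}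
  | TDOp.join _ _ _ => Q.XC

/-- `X^C_+` : the bag trace just above `imax`. -/
def XCplus (Q : TDQuint V) : Set V :=
  match Q.tauR with
  | TDOp.introduce v => Q.XC ∪ {v}
  | TDOp.forget v => Q.XC \ {v}
  | TDOp.join _ _ _ => Q.XC

/-- `XF^S(Q)` (pathwidth version). -/
def XFPset (G : SimpleGraph V) (C : Set V) (Q : TDQuint V) : Set V :=
  {x | x ∉ C ∧ G.neighborSet x ⊆ Q.XC ∧
    (XCminus Q ⊂ Q.XC → ¬ G.neighborSet x ⊆ XCminus Q) ∧
    (XCplus Q ⊂ Q.XC → ¬ G.neighborSet x ⊆ XCplus Q)}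

/-- `ε(Q)` (pathwidth version). -/
def epsP (G : SimpleGraph V) (C : Set V) (Q : TDQuint V) : ℕ :=
  if (XFPset G C Q).Nonempty then 1 else 0

/-- The local pathwidth of a quintuple. -/
def locpw (G : SimpleGraph V) (C : Set V) (Q : TDQuint V) : ℕ :=
  Q.XC.ncard + (XTRset G C Q).ncard +
    max (max (XLset G C Q).ncard (XRset G C Q).ncard) (epsP G C Q) - 1

/-- Fuelled version of the partial pathwidth recursion. -/
def ppwAux (G : SimpleGraph V) (C : Set V) : ℕ → TDQuint V → ℕ
  | 0, Q => locpw G C Q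
  | m + 1, Q =>
    if ∃ u, Q.tauL = TDOp.introduce u ∧ Q.LC = ∅ ∧ Q.XC = {u} ∧ Q.RC = C \ {u} then
      locpw G C Q
    else
      match Q.tauL with
      | TDOp.introduce u =>
          max (locpw G C Q)
            (sInf {n | ∃ τ,
              ValidQuintP G C ⟨τ, Q.LC, Q.XC \ {u}, Q.RC ∪ {u}, TDOp.introduce u⟩ ∧
              n = ppwAux G C m ⟨τ, Q.LC, Q.XC \ {u}, Q.RC ∪ {u}, TDOp.introduce u⟩})
      | TDOp.forget u =>
          max (locpw G C Q)
            (sInf {n | ∃ τ,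
              ValidQuintP G C ⟨τ, Q.LC \ {u}, Q.XC ∪ {u}, Q.RC, TDOp.forget u⟩ ∧
              n = ppwAux G C m ⟨τ, Q.LC \ {u}, Q.XC ∪ {u}, Q.RC, TDOp.forget u⟩})
      | TDOp.join _ _ _ => locpw G C Q

/-- The partial pathwidth `ppw(Q)` of a quintuple. -/
def ppw (G : SimpleGraph V) (C : Set V) (Q : TDQuint V) : ℕ :=
  ppwAux G C (2 * Q.LC.ncard + Q.XC.ncard) Q

end

end

set_option linter.unusedSectionVars false

section Aux

open RootedTreeDecomp

variable {V ι : Type} [DecidableEq V] {G : SimpleGraph V} (t : RootedTreeDecomp V ι G)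

lemma anc_refl (i : ι) : t.anc i i := ⟨0, rfl⟩

lemma anc_trans {i j k : ι} (h1 : t.anc i j) (h2 : t.anc j k) : t.anc i k := by
  obtain ⟨n, hn⟩ := h1
  obtain ⟨m, hm⟩ := h2
  exact ⟨n + m, by rw [Function.iterate_add_apply, hm, hn]⟩

lemma iterate_root (n : ℕ) : t.parent^[n] t.root = t.root := by
  induction n with
  | zero => rfl
  | succ n ih => rw [Function.iterate_succ_apply', ih, t.parent_root]

lemma eq_root_of_parent_eq {i : ι} (h : t.parent i = i) : i = t.root := by
  obtain ⟨n, hn⟩ := t.reaches_root i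
  have hfix : ∀ m, t.parent^[m] i = i := by
    intro m; induction m with
    | zero => rfl
    | succ m ih => rw [Function.iterate_succ_apply', ih, h]
  rw [hfix n] at hn; exact hn

lemma anc_antisymm {i j : ι} (hij : t.anc i j) (hji : t.anc j i) : i = j := by
  obtain ⟨n, hn⟩ := hij
  obtain ⟨m, hm⟩ := hji
  rcases Nat.eq_zero_or_pos (m + n) with h0 | hpos
  · have hn0 : n = 0 := by omega
    subst hn0; simpa using hn.symm
  · have hper : t.parent^[m + n] j = j := by
      rw [Function.iterate_add_apply, hn, hm]
    have hper' : ∀ c, t.parent^[c * (m + n)] j = j := by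
      intro c; induction c with
      | zero => simp
      | succ c ih => rw [Nat.succ_mul, Function.iterate_add_apply, hper, ih]
    obtain ⟨k, hk⟩ := t.reaches_root j
    have hjr : j = t.root := by
      have h1 : t.parent^[k * (m + n)] j = j := hper' k
      have heq : t.parent^[k * (m + n)] j
          = t.parent^[k * (m + n) - k] (t.parent^[k] j) := by
        rw [← Function.iterate_add_apply]
        congr 1
        have : k ≤ k * (m + n) := by nlinarith
        omega
      rw [heq, hk, iterate_root] at h1
      exact h1.symm
    have hir : i = t.root := by rw [← hn, hjr, iterate_root]
    rw [hir, hjr]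

lemma child_exists_aux : ∀ (n : ℕ) (i m : ι), t.parent^[n] m = i → m ≠ i →
    ∃ j, t.parent j = i ∧ j ≠ t.root ∧ t.anc j m := by
  intro n
  induction n with
  | zero => intro i m h hne; exact absurd h hne
  | succ n ih =>
    intro i m h hne
    by_cases hm1 : t.parent^[n] m = i
    · exact ih i m hm1 hne
    · have hpj : t.parent (t.parent^[n] m) = i :=
        (Function.iterate_succ_apply' t.parent n m).symm.trans h
      refine ⟨t.parent^[n] m, hpj, ?_, ⟨n, rfl⟩⟩
      intro hr
      apply hm1
      rw [hr, t.parent_root] at hpj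
      rw [hr, hpj]

lemma child_exists {i m : ι} (h : t.anc i m) (hne : m ≠ i) :
    ∃ j, t.parent j = i ∧ j ≠ t.root ∧ t.anc j m := by
  obtain ⟨n, hn⟩ := h
  exact child_exists_aux t n i m hn hne

lemma child_unique (hnp : t.IsNicePath) {i j k : ι}
    (hj : j ∈ t.children i) (hk : k ∈ t.children i) : j = k := by
  rcases hnp i with hl | hi | hf
  · rw [hl.1] at hj; exact absurd hj (Set.notMem_empty j)
  · obtain ⟨j0, u, hc, _, _⟩ := hi
    rw [hc, Set.mem_singleton_iff] at hj hk
    rw [hj, hk]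
  · obtain ⟨j0, u, hc, _, _⟩ := hf
    rw [hc, Set.mem_singleton_iff] at hj hk
    rw [hj, hk]

lemma anc_total_aux (hnp : t.IsNicePath) :
    ∀ (N n m : ℕ) (i j r : ι), n + m ≤ N → t.parent^[n] i = r → t.parent^[m] j = r →
      t.anc i j ∨ t.anc j i := by
  intro N
  induction N with
  | zero =>
    intro n m i j r hle h1 h2
    have hn : n = 0 := by omega
    have hm : m = 0 := by omega
    subst hn; subst hm
    left; exact ⟨0, by simpa using h2.trans h1.symm⟩
  | succ N ih =>
    intro n m i j r hle h1 h2
    cases n with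
    | zero => left; exact ⟨m, by simpa using h2.trans h1.symm⟩
    | succ n =>
      cases m with
      | zero => right; exact ⟨n + 1, by simpa using h1.trans h2.symm⟩
      | succ m =>
        have hi1 : t.parent (t.parent^[n] i) = r :=
          (Function.iterate_succ_apply' t.parent n i).symm.trans h1
        have hj1 : t.parent (t.parent^[m] j) = r :=
          (Function.iterate_succ_apply' t.parent m j).symm.trans h2
        by_cases hci : t.parent^[n] i = r
        · exact ih n (m + 1) i j r (by omega) hci h2
        by_cases hcj : t.parent^[m] j = r
        · exact ih (n + 1) m i j r (by omega) h1 hcj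
        · have hir : t.parent^[n] i ≠ t.root := by
            intro hr
            rw [hr] at hi1; rw [t.parent_root] at hi1
            exact hci (hr.trans hi1)
          have hjr : t.parent^[m] j ≠ t.root := by
            intro hr
            rw [hr] at hj1; rw [t.parent_root] at hj1
            exact hcj (hr.trans hj1)
          have heq : t.parent^[n] i = t.parent^[m] j :=
            child_unique t hnp ⟨hir, hi1⟩ ⟨hjr, hj1⟩
          exact ih n m i j (t.parent^[n] i) (by omega) rfl heq.symm

lemma anc_total (hnp : t.IsNicePath) (i j : ι) : t.anc i j ∨ t.anc j i := by
  obtain ⟨n, hn⟩ := t.reaches_root i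
  obtain ⟨m, hm⟩ := t.reaches_root j
  exact anc_total_aux t hnp (n + m) n m i j t.root le_rfl hn hm

lemma between_of (hnp : t.IsNicePath) {k m m' : ι}
    (h1 : t.anc k m) (h2 : t.anc m' k) : betweenNodes t.parent k m m' := by
  refine ⟨Or.inl h1, fun l hl hl' => ?_⟩
  rcases anc_total t hnp l k with h | h
  · exact h
  · have hkm' : t.anc k m' := anc_trans t h hl'
    have hkeq : k = m' := anc_antisymm t hkm' h2
    rw [hkeq]; exact hl'

lemma bag_convex (hnp : t.IsNicePath) {v : V} {m m' k : ι}
    (hm : v ∈ t.bag m) (hm' : v ∈ t.bag m')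
    (h1 : t.anc k m) (h2 : t.anc m' k) : v ∈ t.bag k :=
  t.bag_conn v m m' k hm hm' (between_of t hnp h1 h2)

lemma strict_anc_parent {m i : ι} (h : t.anc m i) (hne : m ≠ i) : t.anc m (t.parent i) := by
  obtain ⟨n, hn⟩ := h
  cases n with
  | zero => exact absurd (by simpa using hn.symm) hne
  | succ n => exact ⟨n, (Function.iterate_succ_apply t.parent n i).symm.trans hn⟩

lemma subVerts_eq {i j : ι} (hch : t.children i = {j}) (hj : t.parent j = i) :
    t.subVerts i = ↑(t.bag i) ∪ t.subVerts j := by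
  ext v
  constructor
  · rintro ⟨m, hm, hv⟩
    by_cases hmi : m = i
    · left; rw [← hmi]; exact hv
    · right
      obtain ⟨j', hj', hj'r, hj'm⟩ := child_exists t hm hmi
      have hjj : j' = j := by
        have hmem : j' ∈ t.children i := ⟨hj'r, hj'⟩
        rw [hch, Set.mem_singleton_iff] at hmem; exact hmem
      exact ⟨m, hjj ▸ hj'm, hv⟩
  · rintro (hv | ⟨m, hm, hv⟩)
    · exact ⟨i, anc_refl t i, hv⟩
    · exact ⟨m, anc_trans t ⟨1, by simpa using hj⟩ hm, hv⟩

lemma trace_sets_eq {C : Set V} {i j : ι} (hch : t.children i = {j}) (hj : t.parent j = i)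
    (hbagC : (↑(t.bag i) : Set V) ∩ C = ↑(t.bag j) ∩ C) :
    t.Lset i ∩ C = t.Lset j ∩ C ∧ t.Rset i ∩ C = t.Rset j ∩ C := by
  have hsubC : t.subVerts i ∩ C = t.subVerts j ∩ C := by
    rw [subVerts_eq t hch hj, Set.union_inter_distrib_right, hbagC]
    apply Set.union_eq_self_of_subset_left
    exact Set.inter_subset_inter_left C (fun v hv => ⟨j, anc_refl t j, hv⟩)
  have hS : ∀ v, v ∈ C → (v ∈ t.subVerts i ↔ v ∈ t.subVerts j) := by
    intro v hv
    constructor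
    · intro h; exact ((Set.ext_iff.mp hsubC v).mp ⟨h, hv⟩).1
    · intro h; exact ((Set.ext_iff.mp hsubC v).mpr ⟨h, hv⟩).1
  have hB : ∀ v, v ∈ C → (v ∈ t.bag i ↔ v ∈ t.bag j) := by
    intro v hv
    constructor
    · intro h; exact ((Set.ext_iff.mp hbagC v).mp ⟨h, hv⟩).1
    · intro h; exact ((Set.ext_iff.mp hbagC v).mpr ⟨h, hv⟩).1
  constructor
  · ext v
    simp only [RootedTreeDecomp.Lset, Set.mem_inter_iff, Set.mem_diff, Finset.mem_coe]
    constructor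
    · rintro ⟨⟨h1, h2⟩, hv⟩
      exact ⟨⟨(hS v hv).mp h1, fun h => h2 ((hB v hv).mpr h)⟩, hv⟩
    · rintro ⟨⟨h1, h2⟩, hv⟩
      exact ⟨⟨(hS v hv).mpr h1, fun h => h2 ((hB v hv).mp h)⟩, hv⟩
  · ext v
    simp only [RootedTreeDecomp.Rset, Set.mem_inter_iff, Set.mem_diff, Set.mem_univ, true_and]
    constructor
    · rintro ⟨h1, hv⟩; exact ⟨fun h => h1 ((hS v hv).mpr h), hv⟩
    · rintro ⟨h1, hv⟩; exact ⟨fun h => h1 ((hS v hv).mp h), hv⟩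

lemma card_bound₀ {V : Type} [Fintype V] [DecidableEq V] {A B : Set V} {s : Finset V}
    (hA : A ⊆ ↑s) (hB : B ⊆ ↑s) (hAB : Disjoint A B) :
    A.ncard + B.ncard ≤ s.card := by
  have h1 : (A ∪ B).ncard = A.ncard + B.ncard :=
    Set.ncard_union_eq hAB (Set.toFinite _) (Set.toFinite _)
  calc A.ncard + B.ncard = (A ∪ B).ncard := h1.symm
    _ ≤ (↑s : Set V).ncard := Set.ncard_le_ncard (Set.union_subset hA hB) (Set.toFinite _)
    _ = s.card := Set.ncard_coe_finset s

lemma card_bound {V : Type} [Fintype V] [DecidableEq V] {A B : Set V} {e : V} {s : Finset V}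
    (hA : A ⊆ ↑s) (hB : B ⊆ ↑s) (he : e ∈ s) (hAB : Disjoint A B)
    (heA : e ∉ A) (heB : e ∉ B) :
    A.ncard + B.ncard + 1 ≤ s.card := by
  have h1 : (insert e (A ∪ B)).ncard = A.ncard + B.ncard + 1 := by
    rw [Set.ncard_insert_of_notMem (by simp [heA, heB]) (Set.toFinite _),
        Set.ncard_union_eq hAB (Set.toFinite _) (Set.toFinite _)]
  calc A.ncard + B.ncard + 1 = (insert e (A ∪ B)).ncard := h1.symm
    _ ≤ (↑s : Set V).ncard := Set.ncard_le_ncard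
        (Set.insert_subset (Finset.mem_coe.mpr he) (Set.union_subset hA hB)) (Set.toFinite _)
    _ = s.card := Set.ncard_coe_finset s

end Aux

theorem path_bag_of_size_eps {V ι : Type} [Fintype V] [DecidableEq V]
    (G : SimpleGraph V) (C : Set V) (hC : IsVertexCover G C)
    (Q : TDQuint V) (hQ : ValidQuintP G C Q)
    (t : RootedTreeDecomp V ι G) (ht : t.IsNicePath)
    (hresp : ∃ imin imax, RespectsAtND t C Q imin imax) :
    ∃ i, Q.XC.ncard + (XTRset G C Q).ncard + epsP G C Q ≤ (t.bag i).card := by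
  classical
  obtain ⟨imin, imax, hr⟩ := hresp
  obtain ⟨h1, h2, h3, h4, h5, h6⟩ := hr
  obtain ⟨hL1, hX1, hR1⟩ := h1
  obtain ⟨hL2, hX2, hR2⟩ := h2
  have hXCbag1 : Q.XC ⊆ ↑(t.bag imin) := by rw [hX1]; exact Set.inter_subset_left
  have hXCbag2 : Q.XC ⊆ ↑(t.bag imax) := by rw [hX2]; exact Set.inter_subset_left
  have hXCC : Q.XC ⊆ C := by rw [hX1]; exact Set.inter_subset_right
  have hdisj : Disjoint Q.XC (XTRset G C Q) := by
    rw [Set.disjoint_left]; intro a ha ha'; exact ha'.1 (hXCC ha)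
  have hLCnotmin : ∀ a ∈ Q.LC, a ∉ (↑(t.bag imin) : Set V) := by
    intro a ha; rw [hL1] at ha; exact ha.1.2
  have hLC_below : ∀ a ∈ Q.LC, ∀ m, a ∈ t.bag m → t.anc imin m ∧ m ≠ imin := by
    intro a ha m hm
    have ha' := ha
    rw [hL1] at ha'
    obtain ⟨⟨⟨k, hk, hak⟩, hnb⟩, haC⟩ := ha'
    have hne : m ≠ imin := fun h => hnb (by rw [← h]; exact hm)
    rcases anc_total t ht m imin with h | h
    · exact absurd (Finset.mem_coe.mpr (bag_convex t ht hak hm hk h)) hnb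
    · exact ⟨h, hne⟩
  have hRC_above : ∀ b ∈ Q.RC, ∀ m, b ∈ t.bag m → t.anc m imax ∧ m ≠ imax := by
    intro b hb m hm
    rw [hR2] at hb
    have hnotsub : b ∉ t.subVerts imax := hb.1.2
    have hna : ¬ t.anc imax m := fun h => hnotsub ⟨m, h, hm⟩
    rcases anc_total t ht m imax with h | h
    · exact ⟨h, fun he => hna (by rw [he]; exact anc_refl t imax)⟩
    · exact absurd h hna
  have hXTRmem : ∀ y ∈ XTRset G C Q, ∀ k,
      (∀ m, t.anc imin m → m ≠ imin → t.anc k m) →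
      (∀ m', t.anc m' imax → m' ≠ imax → t.anc m' k) → y ∈ t.bag k := by
    intro y hy k hk1 hk2
    obtain ⟨hyC, ⟨a, haN, haL⟩, ⟨b, hbN, hbR⟩⟩ := hy
    obtain ⟨m, hym, ham⟩ := t.bag_edge y a haN
    obtain ⟨m', hym', hbm'⟩ := t.bag_edge y b hbN
    obtain ⟨hm1, hm2⟩ := hLC_below a haL m ham
    obtain ⟨hm1', hm2'⟩ := hRC_above b hbR m' hbm'
    exact bag_convex t ht hym hym' (hk1 m hm1 hm2) (hk2 m' hm1' hm2')
  have hXTRin : ∀ k, t.anc imax k → t.anc k imin → XTRset G C Q ⊆ ↑(t.bag k) := by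
    intro k hk1 hk2 y hy
    exact Finset.mem_coe.mpr (hXTRmem y hy k
      (fun m hm _ => anc_trans t hk2 hm)
      (fun m' hm' _ => anc_trans t hm' hk1))
  have hXCin : ∀ k, t.anc imax k → t.anc k imin → Q.XC ⊆ ↑(t.bag k) := by
    intro k hk1 hk2 c hc
    exact Finset.mem_coe.mpr (bag_convex t ht (Finset.mem_coe.mp (hXCbag1 hc))
      (Finset.mem_coe.mp (hXCbag2 hc)) hk2 hk1)
  by_cases heps : (XFPset G C Q).Nonempty
  · obtain ⟨x, hx⟩ := heps
    obtain ⟨hxC, hxN, hxm, hxp⟩ := hx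
    have heps1 : epsP G C Q = 1 := by rw [epsP, if_pos ⟨x, hxC, hxN, hxm, hxp⟩]
    rw [heps1]
    have hxXC : x ∉ Q.XC := fun h => hxC (hXCC h)
    have hxXTR : x ∉ XTRset G C Q := by
      rintro ⟨-, ⟨a, haN, haL⟩, -⟩
      exact hLCnotmin a haL (hXCbag1 (hxN haN))
    by_cases hP1 : ∃ k, t.anc imax k ∧ t.anc k imin ∧ x ∈ t.bag k
    · obtain ⟨k, hk1, hk2, hxk⟩ := hP1
      exact ⟨k, card_bound (hXCin k hk1 hk2) (hXTRin k hk1 hk2) hxk hdisj hxXC hxXTR⟩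
    · have hdich : ∀ m, x ∈ t.bag m →
          (t.anc imin m ∧ m ≠ imin) ∨ (t.anc m imax ∧ m ≠ imax) := by
        intro m hm
        rcases anc_total t ht imin m with h | h
        · by_cases hme : m = imin
          · exact absurd ⟨imin, h3, anc_refl t imin, hme ▸ hm⟩ hP1
          · exact Or.inl ⟨h, hme⟩
        · rcases anc_total t ht imax m with h' | h'
          · exact absurd ⟨m, h', h, hm⟩ hP1
          · refine Or.inr ⟨h', fun he => hP1 ⟨m, ?_, h, hm⟩⟩
            rw [he]; exact anc_refl t imax
      obtain ⟨m₀, hm₀⟩ := t.bag_cover x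
      rcases hdich m₀ hm₀ with hbelow₀ | habove₀
      · -- Case A : all bags of x strictly below imin
        have hall : ∀ m, x ∈ t.bag m → t.anc imin m ∧ m ≠ imin := by
          intro m hm
          rcases hdich m hm with h | h
          · exact h
          · exact absurd ⟨imin, h3, anc_refl t imin,
              bag_convex t ht hm₀ hm hbelow₀.1 (anc_trans t h.1 h3)⟩ hP1
        obtain ⟨j0, hj0p, hj0r, -⟩ := child_exists t hbelow₀.1 hbelow₀.2
        have hj0mem : j0 ∈ t.children imin := ⟨hj0r, hj0p⟩
        have hancij0 : t.anc imin j0 := ⟨1, by simpa using hj0p⟩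
        cases htauL : Q.tauL with
        | join X L1 L2 =>
          exfalso
          rw [htauL] at h5
          have h5' : ∃ j k, j ≠ k ∧ t.children imin = ({j, k} : Set ι) ∧
              t.bag j = t.bag imin ∧ t.bag k = t.bag imin ∧
              X = (↑(t.bag imin) : Set V) ∩ C ∧ L1 = t.Lset j ∩ C ∧ L2 = t.Lset k ∩ C := h5
          obtain ⟨j, k, hjk, hch, -⟩ := h5'
          have hjm : j ∈ t.children imin := by rw [hch]; exact Set.mem_insert _ _
          have hkm : k ∈ t.children imin := by
            rw [hch]; exact Set.mem_insert_of_mem _ rfl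
          exact hjk (child_unique t ht hjm hkm)
        | introduce u =>
          rw [htauL] at h5
          have h5' : (t.children imin = ∅ ∧ t.bag imin = {u}) ∨
              ∃ j, t.children imin = {j} ∧ u ∉ t.bag j ∧
                t.bag imin = insert u (t.bag j) := h5
          rcases h5' with ⟨hch0, -⟩ | ⟨j, hch, huj, hbag⟩
          · rw [hch0] at hj0mem; exact absurd hj0mem (Set.notMem_empty j0)
          have hjj0 : j0 = j := by
            rw [hch, Set.mem_singleton_iff] at hj0mem; exact hj0mem
          subst hjj0
          have hdesc : ∀ m, t.anc imin m → m ≠ imin → t.anc j0 m := by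
            intro m hm hne
            obtain ⟨j', hp, hr2, hjm⟩ := child_exists t hm hne
            have hj' : j' = j0 := by
              have hmem : j' ∈ t.children imin := ⟨hr2, hp⟩
              rw [hch, Set.mem_singleton_iff] at hmem; exact hmem
            exact hj' ▸ hjm
          have hNx : ∀ c ∈ G.neighborSet x, c ∈ t.bag j0 := by
            intro c hc
            obtain ⟨m, hxm, hcm⟩ := t.bag_edge x c hc
            obtain ⟨ha, hb⟩ := hall m hxm
            exact bag_convex t ht hcm (Finset.mem_coe.mp (hXCbag1 (hxN hc)))
              (hdesc m ha hb) hancij0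
          exfalso
          by_cases huC : u ∈ C
          · have huXC : u ∈ Q.XC := by
              rw [hX1]
              exact ⟨Finset.mem_coe.mpr (by rw [hbag]; exact Finset.mem_insert_self u _), huC⟩
            have hXCm : XCminus Q = Q.XC \ {u} := by unfold XCminus; rw [htauL]
            apply hxm (by rw [hXCm]; exact Set.sdiff_singleton_ssubset.mpr huXC)
            rw [hXCm]
            intro c hc
            refine ⟨hxN hc, fun hcu => ?_⟩
            exact huj ((Set.mem_singleton_iff.mp hcu) ▸ hNx c hc)
          · have hbagC : (↑(t.bag imin) : Set V) ∩ C = ↑(t.bag j0) ∩ C := by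
              ext c
              simp only [hbag, Finset.coe_insert, Set.mem_inter_iff, Set.mem_insert_iff,
                Finset.mem_coe]
              constructor
              · rintro ⟨h | h, hcC⟩
                · exact absurd (h ▸ hcC) huC
                · exact ⟨h, hcC⟩
              · rintro ⟨h, hcC⟩; exact ⟨Or.inr h, hcC⟩
            obtain ⟨hLeq, hReq⟩ := trace_sets_eq t hch hj0p hbagC
            have htr : t.HasTrace C j0 Q.LC Q.XC Q.RC :=
              ⟨by rw [hL1, hLeq], by rw [hX1, hbagC], by rw [hR1, hReq]⟩
            obtain ⟨hanc1, -⟩ := h4 j0 htr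
            have hje : j0 = imin := anc_antisymm t hanc1 hancij0
            have hpp : t.parent j0 = j0 := by rw [hj0p, ← hje]
            exact hj0r (eq_root_of_parent_eq t hpp)
        | forget u =>
          rw [htauL] at h5
          have h5' : ∃ j, t.children imin = {j} ∧ u ∈ t.bag j ∧
              t.bag imin = (t.bag j).erase u := h5
          obtain ⟨j, hch, huj, hbag⟩ := h5'
          have hjj0 : j0 = j := by
            rw [hch, Set.mem_singleton_iff] at hj0mem; exact hj0mem
          subst hjj0
          have hdesc : ∀ m, t.anc imin m → m ≠ imin → t.anc j0 m := by
            intro m hm hne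
            obtain ⟨j', hp, hr2, hjm⟩ := child_exists t hm hne
            have hj' : j' = j0 := by
              have hmem : j' ∈ t.children imin := ⟨hr2, hp⟩
              rw [hch, Set.mem_singleton_iff] at hmem; exact hmem
            exact hj' ▸ hjm
          by_cases huC : u ∈ C
          · refine ⟨j0, ?_⟩
            have hXCj0 : Q.XC ⊆ ↑(t.bag j0) := by
              intro c hc
              have hcb := Finset.mem_coe.mp (hXCbag1 hc)
              rw [hbag] at hcb
              exact Finset.mem_coe.mpr (Finset.mem_of_mem_erase hcb)
            have hXTRj0 : XTRset G C Q ⊆ ↑(t.bag j0) := by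
              intro y hy
              exact Finset.mem_coe.mpr (hXTRmem y hy j0 hdesc
                (fun m' hm' _ => anc_trans t (anc_trans t hm' h3) hancij0))
            have huXC : u ∉ Q.XC := by
              intro h
              have hcb := Finset.mem_coe.mp (hXCbag1 h)
              rw [hbag] at hcb
              exact Finset.notMem_erase u _ hcb
            have huXTR : u ∉ XTRset G C Q := fun h => h.1 huC
            exact card_bound hXCj0 hXTRj0 huj hdisj huXC huXTR
          · exfalso
            have hbagC : (↑(t.bag imin) : Set V) ∩ C = ↑(t.bag j0) ∩ C := by
              ext c
              simp only [hbag, Finset.coe_erase, Set.mem_inter_iff, Set.mem_diff,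
                Finset.mem_coe, Set.mem_singleton_iff]
              constructor
              · rintro ⟨⟨h, -⟩, hcC⟩; exact ⟨h, hcC⟩
              · rintro ⟨h, hcC⟩; exact ⟨⟨h, fun he => huC (he ▸ hcC)⟩, hcC⟩
            obtain ⟨hLeq, hReq⟩ := trace_sets_eq t hch hj0p hbagC
            have htr : t.HasTrace C j0 Q.LC Q.XC Q.RC :=
              ⟨by rw [hL1, hLeq], by rw [hX1, hbagC], by rw [hR1, hReq]⟩
            obtain ⟨hanc1, -⟩ := h4 j0 htr
            have hje : j0 = imin := anc_antisymm t hanc1 hancij0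
            have hpp : t.parent j0 = j0 := by rw [hj0p, ← hje]
            exact hj0r (eq_root_of_parent_eq t hpp)
      · -- Case B : all bags of x strictly above imax
        have hall : ∀ m, x ∈ t.bag m → t.anc m imax ∧ m ≠ imax := by
          intro m hm
          rcases hdich m hm with h | h
          · exact absurd ⟨imin, h3, anc_refl t imin,
              bag_convex t ht hm hm₀ h.1 (anc_trans t habove₀.1 h3)⟩ hP1
          · exact h
        have himaxroot : imax ≠ t.root := by
          intro hroot
          obtain ⟨n, hn⟩ := habove₀.1
          rw [hroot, iterate_root] at hn
          exact habove₀.2 (by rw [← hn, hroot])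
        rcases h6 with ⟨hroot, -⟩ | ⟨-, hop⟩
        · exact absurd hroot himaxroot
        have hancp0 : t.anc (t.parent imax) imax := ⟨1, by simp⟩
        have himaxch : imax ∈ t.children (t.parent imax) := ⟨himaxroot, rfl⟩
        have hNup : ∀ m, x ∈ t.bag m → t.anc m (t.parent imax) := fun m hm =>
          strict_anc_parent t (hall m hm).1 (hall m hm).2
        have hNx : ∀ c ∈ G.neighborSet x, c ∈ t.bag (t.parent imax) := by
          intro c hc
          obtain ⟨m, hxm, hcm⟩ := t.bag_edge x c hc
          exact bag_convex t ht (Finset.mem_coe.mp (hXCbag2 (hxN hc))) hcm hancp0 (hNup m hxm)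
        cases htauR : Q.tauR with
        | join X L1 L2 =>
          exfalso
          rw [htauR] at hop
          have hop' : ∃ j k, j ≠ k ∧ t.children (t.parent imax) = ({j, k} : Set ι) ∧
              t.bag j = t.bag (t.parent imax) ∧ t.bag k = t.bag (t.parent imax) ∧
              X = (↑(t.bag (t.parent imax)) : Set V) ∩ C ∧
              L1 = t.Lset j ∩ C ∧ L2 = t.Lset k ∩ C := hop
          obtain ⟨j, k, hjk, hch, -⟩ := hop'
          have hjm : j ∈ t.children (t.parent imax) := by rw [hch]; exact Set.mem_insert _ _
          have hkm : k ∈ t.children (t.parent imax) := by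
            rw [hch]; exact Set.mem_insert_of_mem _ rfl
          exact hjk (child_unique t ht hjm hkm)
        | forget v =>
          exfalso
          rw [htauR] at hop
          have hop' : ∃ j, t.children (t.parent imax) = {j} ∧ v ∈ t.bag j ∧
              t.bag (t.parent imax) = (t.bag j).erase v := hop
          obtain ⟨j, hch, hvj, hbag⟩ := hop'
          have hjimax : imax = j := by
            rw [hch, Set.mem_singleton_iff] at himaxch; exact himaxch
          subst hjimax
          by_cases hvC : v ∈ C
          · have hvXC : v ∈ Q.XC := by
              rw [hX2]; exact ⟨Finset.mem_coe.mpr hvj, hvC⟩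
            have hXCp : XCplus Q = Q.XC \ {v} := by unfold XCplus; rw [htauR]
            apply hxp (by rw [hXCp]; exact Set.sdiff_singleton_ssubset.mpr hvXC)
            rw [hXCp]
            intro c hc
            refine ⟨hxN hc, fun hcv => ?_⟩
            have hcb : c ∈ t.bag (t.parent imax) := hNx c hc
            rw [hbag] at hcb
            exact Finset.notMem_erase v _ ((Set.mem_singleton_iff.mp hcv) ▸ hcb)
          · have hbagC : (↑(t.bag (t.parent imax)) : Set V) ∩ C = ↑(t.bag imax) ∩ C := by
              ext c
              simp only [hbag, Finset.coe_erase, Set.mem_inter_iff, Set.mem_diff,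
                Finset.mem_coe, Set.mem_singleton_iff]
              constructor
              · rintro ⟨⟨h, -⟩, hcC⟩; exact ⟨h, hcC⟩
              · rintro ⟨h, hcC⟩; exact ⟨⟨h, fun he => hvC (he ▸ hcC)⟩, hcC⟩
            obtain ⟨hLeq, hReq⟩ := trace_sets_eq t hch rfl hbagC
            have htr : t.HasTrace C (t.parent imax) Q.LC Q.XC Q.RC :=
              ⟨by rw [hLeq]; exact hL2, by rw [hbagC]; exact hX2, by rw [hReq]; exact hR2⟩
            obtain ⟨-, hanc2⟩ := h4 (t.parent imax) htr
            have hpe : t.parent imax = imax := anc_antisymm t hancp0 hanc2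
            exact himaxroot (eq_root_of_parent_eq t hpe)
        | introduce v =>
          rw [htauR] at hop
          have hop' : (t.children (t.parent imax) = ∅ ∧ t.bag (t.parent imax) = {v}) ∨
              ∃ j, t.children (t.parent imax) = {j} ∧ v ∉ t.bag j ∧
                t.bag (t.parent imax) = insert v (t.bag j) := hop
          rcases hop' with ⟨hch0, -⟩ | ⟨j, hch, hvj, hbag⟩
          · rw [hch0] at himaxch; exact absurd himaxch (Set.notMem_empty imax)
          have hjimax : imax = j := by
            rw [hch, Set.mem_singleton_iff] at himaxch; exact himaxch
          subst hjimax
          by_cases hvC : v ∈ C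
          · refine ⟨t.parent imax, ?_⟩
            have hXCp0 : Q.XC ⊆ ↑(t.bag (t.parent imax)) := by
              intro c hc
              rw [hbag]
              exact Finset.mem_coe.mpr
                (Finset.mem_insert_of_mem (Finset.mem_coe.mp (hXCbag2 hc)))
            have hXTRp0 : XTRset G C Q ⊆ ↑(t.bag (t.parent imax)) := by
              intro y hy
              exact Finset.mem_coe.mpr (hXTRmem y hy (t.parent imax)
                (fun m hm _ => anc_trans t (anc_trans t hancp0 h3) hm)
                (fun m' hm' hne' => strict_anc_parent t hm' hne'))
            have hvin : v ∈ t.bag (t.parent imax) := by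
              rw [hbag]; exact Finset.mem_insert_self v _
            have hvXC : v ∉ Q.XC := fun h => hvj (Finset.mem_coe.mp (hXCbag2 h))
            have hvXTR : v ∉ XTRset G C Q := fun h => h.1 hvC
            exact card_bound hXCp0 hXTRp0 hvin hdisj hvXC hvXTR
          · exfalso
            have hbagC : (↑(t.bag (t.parent imax)) : Set V) ∩ C = ↑(t.bag imax) ∩ C := by
              ext c
              simp only [hbag, Finset.coe_insert, Set.mem_inter_iff, Set.mem_insert_iff,
                Finset.mem_coe]
              constructor
              · rintro ⟨h | h, hcC⟩
                · exact absurd (h ▸ hcC) hvC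
                · exact ⟨h, hcC⟩
              · rintro ⟨h, hcC⟩; exact ⟨Or.inr h, hcC⟩
            obtain ⟨hLeq, hReq⟩ := trace_sets_eq t hch rfl hbagC
            have htr : t.HasTrace C (t.parent imax) Q.LC Q.XC Q.RC :=
              ⟨by rw [hLeq]; exact hL2, by rw [hbagC]; exact hX2, by rw [hReq]; exact hR2⟩
            obtain ⟨-, hanc2⟩ := h4 (t.parent imax) htr
            have hpe : t.parent imax = imax := anc_antisymm t hancp0 hanc2
            exact himaxroot (eq_root_of_parent_eq t hpe)
  · have heps0 : epsP G C Q = 0 := by rw [epsP, if_neg heps]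
    rw [heps0, Nat.add_zero]
    exact ⟨imin, card_bound₀ (hXCin imin h3 (anc_refl t imin))
      (hXTRin imin h3 (anc_refl t imin)) hdisj⟩
end

section
/- Any nice path decomposition of a graph G respecting a valid quintuple Q has width at least locpw(Q). -/
open scoped Classical

/-!
Every bag on the subpath `imin … imax` of nodes with trace `(L^C, X^C, R^C)` contains `X^C`, and
also `XTR^S`: such a vertex meets a bag strictly below `imin` (through its neighbour in `L^C`) and
one strictly above `imax` (through its neighbour in `R^C`). As `X^C ⊆ C` and `XTR^S ⊆ S`, it
suffices to exhibit, for each of the three terms of the maximum, a bag holding `X^C ∪ XTR^S` and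
that many further vertices. The vertices of `XL^S` are adjacent to the vertex `u` introduced at
`imin`, which occurs in no bag below `imin`, so they lie in the bag of `imin`; symmetrically
`XR^S` lies in the bag of `imax`. For `ε`, the bag just below `imin` (after a forget) or just above
`imax` (before an introduce) is strictly larger than the one on the subpath; in the remaining case
a vertex `x` of `XF^S` lies on the subpath, for otherwise all its neighbours would lie in the bag
next to `imin` (or `imax`), so that either `N(x) ⊆ X^C_∓`, contradicting `x ∈ XF^S`, or that
neighbouring node has the same trace, contradicting the extremality of `imin` (or `imax`).
-/

theorem Set.ncard_add_ncard_add_ncard_le_card {α : Type*} {s : Finset α} {A B W : Set α}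
    (hAB : Disjoint A B) (hW : Disjoint W (A ∪ B)) (hABs : A ∪ B ⊆ s) (hWs : W ⊆ s) :
    A.ncard + B.ncard + W.ncard ≤ s.card := by
  have hfin : ∀ X ⊆ (s : Set α), X.Finite := fun X hX => s.finite_toSet.subset hX
  have hAs : A ⊆ s := Set.subset_union_left.trans hABs
  have hBs : B ⊆ s := Set.subset_union_right.trans hABs
  calc A.ncard + B.ncard + W.ncard = (A ∪ B ∪ W).ncard := by
        rw [Set.ncard_union_eq hW.symm (hfin _ hABs) (hfin _ hWs),
          Set.ncard_union_eq hAB (hfin _ hAs) (hfin _ hBs)]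
    _ ≤ (s : Set α).ncard := Set.ncard_le_ncard (Set.union_subset hABs hWs) s.finite_toSet
    _ = s.card := Set.ncard_coe_finset s

namespace RootedTreeDecomp

variable {V ι : Type} {G : SimpleGraph V} (t : RootedTreeDecomp V ι G)

theorem anc_refl (i : ι) : t.anc i i := ⟨0, rfl⟩

theorem anc_trans {i j k : ι} (hij : t.anc i j) (hjk : t.anc j k) : t.anc i k := by
  obtain ⟨n, hn⟩ := hij
  obtain ⟨m, hm⟩ := hjk
  exact ⟨n + m, by rw [Function.iterate_add_apply, hm, hn]⟩

theorem anc_parent (j : ι) : t.anc (t.parent j) j := ⟨1, rfl⟩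

theorem anc_of_mem_children {i j : ι} (hj : j ∈ t.children i) : t.anc i j :=
  hj.2 ▸ t.anc_parent j

theorem eq_root_of_isPeriodicPt {p : ℕ} {i : ι} (hi : Function.IsPeriodicPt t.parent p i)
    (hp : 0 < p) : i = t.root := by
  obtain ⟨r, hr⟩ := t.reaches_root i
  obtain ⟨q, rfl⟩ : ∃ q, p = q + 1 := ⟨p - 1, by omega⟩
  have hper : t.parent^[(q + 1) * r] i = i := (hi.mul_const r).eq
  rw [add_one_mul, Function.iterate_add_apply, hr,
    Function.iterate_fixed t.parent_root] at hper
  exact hper.symm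

theorem anc_antisymm {i j : ι} (hij : t.anc i j) (hji : t.anc j i) : i = j := by
  obtain ⟨n, hn⟩ := hij
  obtain ⟨m, hm⟩ := hji
  rcases Nat.eq_zero_or_pos (n + m) with h0 | hpos
  · obtain rfl : n = 0 := by omega
    exact hn.symm
  have hi : t.parent^[n + m] i = i := by rw [Function.iterate_add_apply, hm, hn]
  have hj : t.parent^[m + n] j = j := by rw [Function.iterate_add_apply, hn, hm]
  rw [t.eq_root_of_isPeriodicPt hi hpos, t.eq_root_of_isPeriodicPt hj (by omega)]

theorem eq_root_of_anc_root {i : ι} (h : t.anc i t.root) : i = t.root := by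
  obtain ⟨n, hn⟩ := h
  rw [← hn, Function.iterate_fixed t.parent_root]

theorem eq_root_of_anc_parent {j : ι} (h : t.anc j (t.parent j)) : j = t.root :=
  t.eq_root_of_isPeriodicPt (p := 1) (t.anc_antisymm (t.anc_parent j) h) one_pos

theorem anc_parent_of_anc_of_ne {j k : ι} (h : t.anc k j) (hne : k ≠ j) :
    t.anc k (t.parent j) := by
  obtain ⟨n, hn⟩ := h
  cases n with
  | zero => exact absurd hn.symm hne
  | succ n => exact ⟨n, by rwa [Function.iterate_succ_apply] at hn⟩

theorem exists_mem_children_anc {i j : ι} (h : t.anc i j) (hne : i ≠ j) :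
    ∃ c ∈ t.children i, t.anc c j := by
  obtain ⟨n, hn⟩ := h
  induction n with
  | zero => exact absurd hn.symm hne
  | succ n ih =>
    by_cases hc : t.parent^[n] j = t.root
    · exact ih (by rw [← hn, Function.iterate_succ_apply', hc, t.parent_root])
    · exact ⟨_, ⟨hc, by rw [← Function.iterate_succ_apply' t.parent n j, hn]⟩, n, rfl⟩

theorem anc_of_children_eq_singleton {i j k : ι} (hch : t.children i = {j})
    (hk : t.anc i k) (hne : i ≠ k) : t.anc j k := by
  obtain ⟨c, hc, hck⟩ := t.exists_mem_children_anc hk hne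
  rw [hch, Set.mem_singleton_iff] at hc
  exact hc ▸ hck

theorem mem_bag_of_anc_of_anc {v : V} {a b c : ι} (ha : v ∈ t.bag a) (hb : v ∈ t.bag b)
    (hca : t.anc c a) (hbc : t.anc b c) : v ∈ t.bag c :=
  t.bag_conn v a b c ha hb ⟨Or.inl hca, fun _ _ hlb => t.anc_trans hlb hbc⟩

theorem bag_subset_subVerts (i : ι) : (t.bag i : Set V) ⊆ t.subVerts i :=
  fun _ hv => ⟨i, t.anc_refl i, hv⟩

theorem subVerts_eq_of_children_eq {i j : ι} (hch : t.children i = {j}) :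
    t.subVerts i = ↑(t.bag i) ∪ t.subVerts j := by
  ext v
  constructor
  · rintro ⟨k, hk, hv⟩
    by_cases hik : i = k
    · exact Or.inl (hik ▸ hv)
    · exact Or.inr ⟨k, t.anc_of_children_eq_singleton hch hk hik, hv⟩
  · rintro (hv | ⟨k, hk, hv⟩)
    · exact ⟨i, t.anc_refl i, hv⟩
    · exact ⟨k, t.anc_trans (t.anc_of_mem_children (hch ▸ rfl)) hk, hv⟩

theorem hasTrace_iff_of_children_eq {C L X R : Set V} {i j : ι} (hch : t.children i = {j})
    (hbag : ↑(t.bag i) ∩ C = ↑(t.bag j) ∩ C) :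
    t.HasTrace C i L X R ↔ t.HasTrace C j L X R := by
  have hsub : t.subVerts i ∩ C = t.subVerts j ∩ C := by
    rw [t.subVerts_eq_of_children_eq hch, Set.union_inter_distrib_right, hbag,
      ← Set.union_inter_distrib_right, Set.union_eq_right.mpr (t.bag_subset_subVerts j)]
  have hL : t.Lset i ∩ C = t.Lset j ∩ C := by
    simp only [Lset, Set.inter_sdiff_distrib_right, hsub, hbag]
  have hR : t.Rset i ∩ C = t.Rset j ∩ C := by
    simp only [Rset, Set.inter_sdiff_distrib_right, hsub]
  simp only [HasTrace, hL, hR, hbag]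

theorem sub_one_le_width [Fintype ι] {n : ℕ} (i : ι) (h : n ≤ (t.bag i).card) :
    n - 1 ≤ t.width :=
  Nat.sub_le_sub_right (h.trans (Finset.le_sup (f := fun i => (t.bag i).card)
    (Finset.mem_univ i))) 1

end RootedTreeDecomp

namespace RootedTreeDecomp

variable {V ι : Type} [DecidableEq V] {G : SimpleGraph V} {t : RootedTreeDecomp V ι G}

theorem IsNicePath.children_subsingleton (ht : t.IsNicePath) (i : ι) :
    (t.children i).Subsingleton := by
  rcases ht i with ⟨h, -⟩ | ⟨j, -, h, -⟩ | ⟨j, -, h, -⟩ <;> rw [h]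
  exacts [Set.subsingleton_empty, Set.subsingleton_singleton, Set.subsingleton_singleton]

theorem IsNicePath.anc_total (ht : t.IsNicePath) (i j : ι) : t.anc i j ∨ t.anc j i := by
  obtain ⟨n, hn⟩ := t.reaches_root i
  induction n generalizing i with
  | zero => exact Or.inl ((show i = t.root from hn) ▸ t.reaches_root j)
  | succ n ih =>
    rcases ih (t.parent i) (by rwa [Function.iterate_succ_apply] at hn) with h | h
    · by_cases hj : t.parent i = j
      · exact Or.inr (hj ▸ t.anc_parent i)
      obtain ⟨c, hc, hcj⟩ := t.exists_mem_children_anc h hj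
      by_cases hi : i = t.root
      · exact Or.inl (hi ▸ t.reaches_root j)
      · exact Or.inl (ht.children_subsingleton _ hc ⟨hi, rfl⟩ ▸ hcj)
    · exact Or.inr (t.anc_trans h (t.anc_parent i))

theorem IsNicePath.not_hasOp_join (ht : t.IsNicePath) {C X L₁ L₂ : Set V} (i : ι) :
    ¬ t.HasOp C i (.join X L₁ L₂) := by
  rintro ⟨j, k, hjk, hch, -⟩
  exact hjk (ht.children_subsingleton i (hch ▸ Set.mem_insert j {k})
    (hch ▸ Set.mem_insert_of_mem j rfl))

theorem IsNicePath.anc_of_mem_Lset (ht : t.IsNicePath) {a : V} {i j : ι} (ha : a ∈ t.Lset i)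
    (haj : a ∈ t.bag j) : t.anc i j ∧ j ≠ i := by
  obtain ⟨⟨k, hik, hak⟩, hai⟩ := ha
  refine ⟨(ht.anc_total i j).resolve_right fun hji => hai ?_, fun hji => hai (hji ▸ haj)⟩
  exact t.mem_bag_of_anc_of_anc hak haj hik hji

theorem IsNicePath.anc_of_mem_Rset (ht : t.IsNicePath) {a : V} {i j : ι} (ha : a ∈ t.Rset i)
    (haj : a ∈ t.bag j) : t.anc j i ∧ j ≠ i := by
  have hij : ¬ t.anc i j := fun hij => ha.2 ⟨j, hij, haj⟩
  exact ⟨(ht.anc_total i j).resolve_left hij, fun hji => hij (hji ▸ t.anc_refl i)⟩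

theorem hasOp_introduce_of_mem_children {C : Set V} {u : V} {i j : ι}
    (hop : t.HasOp C i (.introduce u)) (hj : j ∈ t.children i) :
    t.children i = {j} ∧ u ∉ t.bag j ∧ t.bag i = insert u (t.bag j) := by
  rcases hop with ⟨hch, -⟩ | ⟨j', hch, hu, hbag⟩
  · exact absurd (hch ▸ hj) (Set.notMem_empty j)
  · obtain rfl : j = j' := by rwa [hch] at hj
    exact ⟨hch, hu, hbag⟩

theorem hasOp_forget_of_mem_children {C : Set V} {u : V} {i j : ι}
    (hop : t.HasOp C i (.forget u)) (hj : j ∈ t.children i) :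
    t.children i = {j} ∧ u ∈ t.bag j ∧ t.bag i = (t.bag j).erase u := by
  obtain ⟨j', hch, hu, hbag⟩ := hop
  obtain rfl : j = j' := by rwa [hch] at hj
  exact ⟨hch, hu, hbag⟩

theorem notMem_bag_of_hasOp_introduce {C : Set V} {u : V} {i k : ι}
    (hop : t.HasOp C i (.introduce u)) (hk : t.anc i k) (hne : i ≠ k) : u ∉ t.bag k := by
  obtain ⟨c, hc, hck⟩ := t.exists_mem_children_anc hk hne
  obtain ⟨-, huc, hbag⟩ := hasOp_introduce_of_mem_children hop hc
  intro huk
  have hui : u ∈ t.bag i := hbag ▸ Finset.mem_insert_self u _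
  exact huc (t.mem_bag_of_anc_of_anc huk hui hck (t.anc_of_mem_children hc))

end RootedTreeDecomp

namespace RespectsAtND

open RootedTreeDecomp

variable {V ι : Type} [DecidableEq V] {G : SimpleGraph V} {t : RootedTreeDecomp V ι G}
  {C : Set V} {Q : TDQuint V} {imin imax : ι}

theorem hasTrace_imin (h : RespectsAtND t C Q imin imax) : t.HasTrace C imin Q.LC Q.XC Q.RC :=
  h.1

theorem hasTrace_imax (h : RespectsAtND t C Q imin imax) : t.HasTrace C imax Q.LC Q.XC Q.RC :=
  h.2.1

theorem anc_imax_imin (h : RespectsAtND t C Q imin imax) : t.anc imax imin := h.2.2.1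

theorem anc_of_hasTrace (h : RespectsAtND t C Q imin imax) {i : ι}
    (hi : t.HasTrace C i Q.LC Q.XC Q.RC) : t.anc i imin ∧ t.anc imax i :=
  h.2.2.2.1 i hi

theorem hasOp_imin (h : RespectsAtND t C Q imin imax) : t.HasOp C imin Q.tauL := h.2.2.2.2.1

theorem imax_eq_root_or_hasOp_parent (h : RespectsAtND t C Q imin imax) :
    (imax = t.root ∧ ∃ w, t.bag t.root = {w} ∧ Q.tauR = .forget w) ∨
      (imax ≠ t.root ∧ t.HasOp C (t.parent imax) Q.tauR) :=
  h.2.2.2.2.2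

theorem hasOp_parent_imax (h : RespectsAtND t C Q imin imax) (hroot : imax ≠ t.root) :
    t.HasOp C (t.parent imax) Q.tauR :=
  (h.imax_eq_root_or_hasOp_parent.resolve_left fun h' => hroot h'.1).2

theorem XC_subset_C (h : RespectsAtND t C Q imin imax) : Q.XC ⊆ C := by
  rw [h.hasTrace_imin.2.1]
  exact Set.inter_subset_right

theorem mem_Lset_of_mem_LC (h : RespectsAtND t C Q imin imax) {a : V} (ha : a ∈ Q.LC) :
    a ∈ t.Lset imin := by
  rw [h.hasTrace_imin.1] at ha
  exact ha.1

theorem mem_Rset_of_mem_RC (h : RespectsAtND t C Q imin imax) {a : V} (ha : a ∈ Q.RC) :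
    a ∈ t.Rset imax := by
  rw [h.hasTrace_imax.2.2] at ha
  exact ha.1

theorem disjoint_LC_XC (h : RespectsAtND t C Q imin imax) : Disjoint Q.LC Q.XC := by
  obtain ⟨hL, hX, -⟩ := h.hasTrace_imin
  rw [hL, hX, Set.disjoint_left]
  exact fun _ hvL hvX => hvL.1.2 hvX.1

theorem disjoint_LC_union_XC_RC (h : RespectsAtND t C Q imin imax) :
    Disjoint (Q.LC ∪ Q.XC) Q.RC := by
  obtain ⟨hL, hX, hR⟩ := h.hasTrace_imin
  rw [hL, hX, hR, Set.disjoint_left]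
  rintro v (⟨⟨hv, -⟩, -⟩ | ⟨hv, -⟩) ⟨⟨-, hv'⟩, -⟩
  exacts [hv' hv, hv' (t.bag_subset_subVerts imin hv)]

theorem disjoint_XC_XTRset (h : RespectsAtND t C Q imin imax) :
    Disjoint Q.XC (XTRset G C Q) :=
  Set.disjoint_left.mpr fun _ hv hv' => hv'.1 (h.XC_subset_C hv)

theorem notMem_XC_union_XTRset {x : V} (h : RespectsAtND t C Q imin imax) (hxC : x ∉ C)
    (hN : Disjoint (G.neighborSet x) Q.LC ∨ Disjoint (G.neighborSet x) Q.RC) :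
    x ∉ Q.XC ∪ XTRset G C Q := by
  rintro (hx | ⟨-, hL, hR⟩)
  · exact hxC (h.XC_subset_C hx)
  · rcases hN with hN | hN
    exacts [Set.not_nonempty_iff_eq_empty.mpr hN.inter_eq hL,
      Set.not_nonempty_iff_eq_empty.mpr hN.inter_eq hR]

theorem XC_subset_bag (h : RespectsAtND t C Q imin imax) {i : ι} (hi : t.anc i imin)
    (hi' : t.anc imax i) : Q.XC ⊆ t.bag i := fun _ hc =>
  t.mem_bag_of_anc_of_anc (h.hasTrace_imin.2.1 ▸ hc).1 (h.hasTrace_imax.2.1 ▸ hc).1 hi hi'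

theorem XTRset_subset_bag (h : RespectsAtND t C Q imin imax) (ht : t.IsNicePath) {i : ι}
    (hi : t.anc i imin) (hi' : t.anc imax i) : XTRset G C Q ⊆ t.bag i := by
  rintro x ⟨-, ⟨a, hxa, haL⟩, ⟨b, hxb, hbR⟩⟩
  obtain ⟨j, hxj, haj⟩ := t.bag_edge x a hxa
  obtain ⟨k, hxk, hbk⟩ := t.bag_edge x b hxb
  have hj := (ht.anc_of_mem_Lset (h.mem_Lset_of_mem_LC haL) haj).1
  have hk := (ht.anc_of_mem_Rset (h.mem_Rset_of_mem_RC hbR) hbk).1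
  exact t.mem_bag_of_anc_of_anc hxj hxk (t.anc_trans hi hj) (t.anc_trans hk hi')

theorem XC_union_XTRset_subset_bag (h : RespectsAtND t C Q imin imax) (ht : t.IsNicePath) {i : ι}
    (hi : t.anc i imin) (hi' : t.anc imax i) : Q.XC ∪ XTRset G C Q ⊆ t.bag i :=
  Set.union_subset (h.XC_subset_bag hi hi') (h.XTRset_subset_bag ht hi hi')

theorem ncard_add_le_card_bag (h : RespectsAtND t C Q imin imax) {W : Set V} {i : ι}
    (hcore : Q.XC ∪ XTRset G C Q ⊆ t.bag i) (hW : W ⊆ t.bag i)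
    (hd : Disjoint W (Q.XC ∪ XTRset G C Q)) :
    Q.XC.ncard + (XTRset G C Q).ncard + W.ncard ≤ (t.bag i).card :=
  Set.ncard_add_ncard_add_ncard_le_card h.disjoint_XC_XTRset hd hcore hW

end RespectsAtND

namespace RespectsAtND

open RootedTreeDecomp

variable {V ι : Type} [DecidableEq V] {G : SimpleGraph V} {t : RootedTreeDecomp V ι G}
  {C : Set V} {Q : TDQuint V} {imin imax : ι}

theorem anc_imin_of_mem_bag (h : RespectsAtND t C Q imin imax) (ht : t.IsNicePath) {u : V}
    {k : ι} (hτ : Q.tauL = .introduce u) (huk : u ∈ t.bag k) : t.anc k imin := by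
  rcases ht.anc_total k imin with hk | hk
  · exact hk
  by_cases hne : imin = k
  · exact hne ▸ t.anc_refl imin
  · exact absurd huk (notMem_bag_of_hasOp_introduce (hτ ▸ h.hasOp_imin) hk hne)

theorem notMem_bag_of_anc_imax (h : RespectsAtND t C Q imin imax) {v : V} {k : ι}
    (hτ : Q.tauR = .forget v) (hk : t.anc k imax) (hne : k ≠ imax) : v ∉ t.bag k := by
  have hroot : imax ≠ t.root := fun he => hne (he ▸ t.eq_root_of_anc_root (he ▸ hk))
  obtain ⟨-, hvi, hbag⟩ :=
    hasOp_forget_of_mem_children (hτ ▸ h.hasOp_parent_imax hroot) ⟨hroot, rfl⟩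
  intro hvk
  have hvp := t.mem_bag_of_anc_of_anc hvi hvk (t.anc_parent imax)
    (t.anc_parent_of_anc_of_ne hk hne)
  exact Finset.notMem_erase v _ (hbag ▸ hvp)

theorem anc_imax_of_mem_bag (h : RespectsAtND t C Q imin imax) (ht : t.IsNicePath) {v : V}
    {k : ι} (hτ : Q.tauR = .forget v) (hvk : v ∈ t.bag k) : t.anc imax k := by
  rcases ht.anc_total imax k with hk | hk
  · exact hk
  by_cases hne : k = imax
  · exact hne ▸ t.anc_refl k
  · exact absurd hvk (h.notMem_bag_of_anc_imax hτ hk hne)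

theorem XLset_subset_bag_imin (h : RespectsAtND t C Q imin imax) (ht : t.IsNicePath) :
    XLset G C Q ⊆ t.bag imin := by
  intro x hx
  rcases hτ : Q.tauL with u | u | ⟨X, L₁, L₂⟩ <;> simp only [XLset, hτ] at hx
  · obtain ⟨-, -, hxu, a, hxa, haL⟩ := hx
    obtain ⟨j, hxj, haj⟩ := t.bag_edge x a hxa
    obtain ⟨k, hxk, huk⟩ := t.bag_edge x u hxu
    exact t.mem_bag_of_anc_of_anc hxj hxk
      (ht.anc_of_mem_Lset (h.mem_Lset_of_mem_LC haL) haj).1 (h.anc_imin_of_mem_bag ht hτ huk)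
  · exact absurd hx (Set.notMem_empty x)
  · exact absurd (hτ ▸ h.hasOp_imin) (ht.not_hasOp_join imin)

theorem disjoint_XLset (h : RespectsAtND t C Q imin imax) :
    Disjoint (XLset G C Q) (Q.XC ∪ XTRset G C Q) := by
  refine Set.disjoint_left.mpr fun x hx => ?_
  rcases hτ : Q.tauL with u | u | ⟨X, L₁, L₂⟩ <;> simp only [XLset, hτ] at hx
  · exact h.notMem_XC_union_XTRset hx.1
      (Or.inr (h.disjoint_LC_union_XC_RC.mono_left hx.2.1))
  · exact absurd hx (Set.notMem_empty x)
  · exact h.notMem_XC_union_XTRset hx.1 (Or.inr (Set.disjoint_iff_inter_eq_empty.mpr hx.2.2.2))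

theorem XRset_subset_bag_imax (h : RespectsAtND t C Q imin imax) (ht : t.IsNicePath) :
    XRset G C Q ⊆ t.bag imax := by
  intro x hx
  rcases hτ : Q.tauR with v | v | ⟨X, L₁, L₂⟩ <;> simp only [XRset, hτ] at hx
  · exact absurd hx (Set.notMem_empty x)
  · obtain ⟨-, -, hxv, b, hxb, hbR⟩ := hx
    obtain ⟨j, hxj, hbj⟩ := t.bag_edge x b hxb
    obtain ⟨k, hxk, hvk⟩ := t.bag_edge x v hxv
    exact t.mem_bag_of_anc_of_anc hxk hxj (h.anc_imax_of_mem_bag ht hτ hvk)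
      (ht.anc_of_mem_Rset (h.mem_Rset_of_mem_RC hbR) hbj).1
  · exact absurd hx (Set.notMem_empty x)

theorem disjoint_XRset (h : RespectsAtND t C Q imin imax) :
    Disjoint (XRset G C Q) (Q.XC ∪ XTRset G C Q) := by
  refine Set.disjoint_left.mpr fun x hx => ?_
  rcases hτ : Q.tauR with v | v | ⟨X, L₁, L₂⟩ <;> simp only [XRset, hτ] at hx
  · exact absurd hx (Set.notMem_empty x)
  · refine h.notMem_XC_union_XTRset hx.1 (Or.inl (Set.disjoint_of_subset_left hx.2.1 ?_))
    exact Set.disjoint_union_left.mpr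
      ⟨(h.disjoint_LC_union_XC_RC.mono_left Set.subset_union_left).symm, h.disjoint_LC_XC.symm⟩
  · exact absurd hx (Set.notMem_empty x)

end RespectsAtND

namespace RespectsAtND

open RootedTreeDecomp

variable {V ι : Type} [DecidableEq V] {G : SimpleGraph V} {t : RootedTreeDecomp V ι G}
  {C : Set V} {Q : TDQuint V} {imin imax : ι}

theorem mem_bag_imin_of_mem_XFPset (h : RespectsAtND t C Q imin imax) (ht : t.IsNicePath)
    {u x : V} {j : ι} (hτ : Q.tauL = .introduce u) (hx : x ∈ XFPset G C Q)
    (hj : t.anc imin j) (hxj : x ∈ t.bag j) : x ∈ t.bag imin := by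
  by_contra hxi
  have hbelow : ∀ k, x ∈ t.bag k → t.anc imin k ∧ imin ≠ k := fun k hxk =>
    (ht.anc_total imin k).elim (fun hk => ⟨hk, fun he => hxi (he ▸ hxk)⟩)
      (fun hk => absurd (t.mem_bag_of_anc_of_anc hxj hxk hj hk) hxi)
  obtain ⟨c, hc, -⟩ := t.exists_mem_children_anc (hbelow j hxj).1 (hbelow j hxj).2
  obtain ⟨hch, huc, hbag⟩ := hasOp_introduce_of_mem_children (hτ ▸ h.hasOp_imin) hc
  obtain ⟨-, hNX, hminus, -⟩ := hx
  have hN : G.neighborSet x ⊆ t.bag c := fun y hy => by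
    obtain ⟨k, hxk, hyk⟩ := t.bag_edge x y hy
    obtain ⟨hk, hne⟩ := hbelow k hxk
    exact t.mem_bag_of_anc_of_anc hyk
      (h.XC_subset_bag (t.anc_refl imin) h.anc_imax_imin (hNX hy))
      (t.anc_of_children_eq_singleton hch hk hne) (t.anc_of_mem_children hc)
  have hXCminus : XCminus Q = Q.XC \ {u} := by simp only [XCminus, hτ]
  by_cases huC : u ∈ C
  · have huX : u ∈ Q.XC := by
      rw [h.hasTrace_imin.2.1, hbag]
      exact ⟨Finset.mem_insert_self u _, huC⟩
    exact hminus (hXCminus ▸ Set.sdiff_singleton_ssubset.mpr huX)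
      (hXCminus ▸ fun y hy => ⟨hNX hy, fun hyu => huc (Set.mem_singleton_iff.mp hyu ▸ hN hy)⟩)
  · -- otherwise the child `c` has the same trace as `imin`, against the minimality of `imin`
    have htr := (t.hasTrace_iff_of_children_eq hch (by
      rw [hbag, Finset.coe_insert, Set.insert_inter_of_notMem huC])).1 h.hasTrace_imin
    exact hc.1 (t.eq_root_of_anc_parent (by rw [hc.2]; exact (h.anc_of_hasTrace htr).1))

theorem mem_bag_imax_of_mem_XFPset (h : RespectsAtND t C Q imin imax) (ht : t.IsNicePath)
    {v x : V} {j : ι} (hτ : Q.tauR = .forget v) (hx : x ∈ XFPset G C Q)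
    (hj : t.anc j imax) (hxj : x ∈ t.bag j) : x ∈ t.bag imax := by
  by_contra hxi
  have habove : ∀ k, x ∈ t.bag k → t.anc k imax ∧ k ≠ imax := fun k hxk =>
    (ht.anc_total k imax).elim (fun hk => ⟨hk, fun he => hxi (he ▸ hxk)⟩)
      (fun hk => absurd (t.mem_bag_of_anc_of_anc hxk hxj hk hj) hxi)
  have hroot : imax ≠ t.root := fun he =>
    (habove j hxj).2 ((t.eq_root_of_anc_root (he ▸ hj)).trans he.symm)
  obtain ⟨hch, hvi, hbag⟩ :=
    hasOp_forget_of_mem_children (hτ ▸ h.hasOp_parent_imax hroot) ⟨hroot, rfl⟩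
  obtain ⟨-, hNX, -, hplus⟩ := hx
  have hN : G.neighborSet x ⊆ t.bag (t.parent imax) := fun y hy => by
    obtain ⟨k, hxk, hyk⟩ := t.bag_edge x y hy
    obtain ⟨hk, hne⟩ := habove k hxk
    exact t.mem_bag_of_anc_of_anc (h.XC_subset_bag h.anc_imax_imin (t.anc_refl imax) (hNX hy))
      hyk (t.anc_parent imax) (t.anc_parent_of_anc_of_ne hk hne)
  have hvp : v ∉ t.bag (t.parent imax) := hbag ▸ Finset.notMem_erase v _
  have hXCplus : XCplus Q = Q.XC \ {v} := by simp only [XCplus, hτ]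
  by_cases hvC : v ∈ C
  · have hvX : v ∈ Q.XC := by
      rw [h.hasTrace_imax.2.1]
      exact ⟨hvi, hvC⟩
    exact hplus (hXCplus ▸ Set.sdiff_singleton_ssubset.mpr hvX)
      (hXCplus ▸ fun y hy => ⟨hNX hy, fun hyv => hvp (Set.mem_singleton_iff.mp hyv ▸ hN hy)⟩)
  · -- otherwise the parent of `imax` has the same trace as `imax`, against its maximality
    have htr := (t.hasTrace_iff_of_children_eq hch (by
      rw [hbag, Finset.coe_erase, Set.sdiff_inter_right_comm,
        Set.sdiff_singleton_eq_self fun hv => hvC hv.2])).2 h.hasTrace_imax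
    exact hroot (t.eq_root_of_anc_parent (h.anc_of_hasTrace htr).2)

theorem exists_mem_bag_of_mem_XFPset (h : RespectsAtND t C Q imin imax) (ht : t.IsNicePath)
    {u v x : V} (hτL : Q.tauL = .introduce u) (hτR : Q.tauR = .forget v)
    (hx : x ∈ XFPset G C Q) : ∃ i, t.anc i imin ∧ t.anc imax i ∧ x ∈ t.bag i := by
  obtain ⟨j, hxj⟩ := t.bag_cover x
  rcases ht.anc_total imin j with hj | hj
  · exact ⟨imin, t.anc_refl imin, h.anc_imax_imin,
      h.mem_bag_imin_of_mem_XFPset ht hτL hx hj hxj⟩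
  rcases ht.anc_total j imax with hj' | hj'
  · exact ⟨imax, h.anc_imax_imin, t.anc_refl imax,
      h.mem_bag_imax_of_mem_XFPset ht hτR hx hj' hxj⟩
  · exact ⟨j, hj, hj', hxj⟩

theorem exists_ssubset_bag_of_tauL_forget (h : RespectsAtND t C Q imin imax)
    (ht : t.IsNicePath) {u : V} (hτ : Q.tauL = .forget u) :
    ∃ i, Q.XC ∪ XTRset G C Q ⊂ t.bag i := by
  obtain ⟨j, -, huj, hbag⟩ : t.HasOp C imin (.forget u) := hτ ▸ h.hasOp_imin
  exact ⟨j, (h.XC_union_XTRset_subset_bag ht (t.anc_refl imin) h.anc_imax_imin).trans_ssubset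
    (Finset.coe_ssubset.mpr (hbag ▸ Finset.erase_ssubset huj))⟩

theorem exists_ssubset_bag_of_tauR_introduce (h : RespectsAtND t C Q imin imax)
    (ht : t.IsNicePath) {v : V} (hτ : Q.tauR = .introduce v) :
    ∃ i, Q.XC ∪ XTRset G C Q ⊂ t.bag i := by
  rcases h.imax_eq_root_or_hasOp_parent with ⟨-, w, -, hw⟩ | ⟨hroot, hop⟩
  · cases hτ.symm.trans hw
  obtain ⟨-, hv, hbag⟩ := hasOp_introduce_of_mem_children (hτ ▸ hop) ⟨hroot, rfl⟩
  exact ⟨_, (h.XC_union_XTRset_subset_bag ht h.anc_imax_imin (t.anc_refl imax)).trans_ssubset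
    (Finset.coe_ssubset.mpr (hbag ▸ Finset.ssubset_insert hv))⟩

theorem exists_ssubset_bag_of_XFPset_nonempty (h : RespectsAtND t C Q imin imax)
    (ht : t.IsNicePath) (hne : (XFPset G C Q).Nonempty) :
    ∃ i, Q.XC ∪ XTRset G C Q ⊂ t.bag i := by
  obtain ⟨x, hx⟩ := hne
  rcases hτL : Q.tauL with u | u | ⟨X, L₁, L₂⟩
  · rcases hτR : Q.tauR with v | v | ⟨X, L₁, L₂⟩
    · exact h.exists_ssubset_bag_of_tauR_introduce ht hτR
    · obtain ⟨i, hi, hi', hxi⟩ := h.exists_mem_bag_of_mem_XFPset ht hτL hτR hx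
      have hxcore := h.notMem_XC_union_XTRset hx.1
        (Or.inl (h.disjoint_LC_XC.symm.mono_left hx.2.1))
      exact ⟨i, (Set.ssubset_iff_of_subset (h.XC_union_XTRset_subset_bag ht hi hi')).mpr ⟨x, hxi, hxcore⟩⟩
    · rcases h.imax_eq_root_or_hasOp_parent with ⟨-, w, -, hw⟩ | ⟨-, hop⟩
      · cases hτR.symm.trans hw
      · exact absurd (hτR ▸ hop) (ht.not_hasOp_join _)
  · exact h.exists_ssubset_bag_of_tauL_forget ht hτL
  · exact absurd (hτL ▸ h.hasOp_imin) (ht.not_hasOp_join imin)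

theorem exists_ncard_XLset_le (h : RespectsAtND t C Q imin imax) (ht : t.IsNicePath) :
    ∃ i, Q.XC.ncard + (XTRset G C Q).ncard + (XLset G C Q).ncard ≤ (t.bag i).card :=
  ⟨imin, h.ncard_add_le_card_bag (h.XC_union_XTRset_subset_bag ht (t.anc_refl imin) h.anc_imax_imin)
    (h.XLset_subset_bag_imin ht) h.disjoint_XLset⟩

theorem exists_ncard_XRset_le (h : RespectsAtND t C Q imin imax) (ht : t.IsNicePath) :
    ∃ i, Q.XC.ncard + (XTRset G C Q).ncard + (XRset G C Q).ncard ≤ (t.bag i).card :=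
  ⟨imax, h.ncard_add_le_card_bag (h.XC_union_XTRset_subset_bag ht h.anc_imax_imin (t.anc_refl imax))
    (h.XRset_subset_bag_imax ht) h.disjoint_XRset⟩

theorem exists_epsP_le (h : RespectsAtND t C Q imin imax) (ht : t.IsNicePath) :
    ∃ i, Q.XC.ncard + (XTRset G C Q).ncard + epsP G C Q ≤ (t.bag i).card := by
  unfold epsP
  split_ifs with hne
  · obtain ⟨i, hi⟩ := h.exists_ssubset_bag_of_XFPset_nonempty ht hne
    obtain ⟨w, hw, hwcore⟩ := Set.exists_of_ssubset hi
    refine ⟨i, ?_⟩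
    simpa using h.ncard_add_le_card_bag hi.subset (Set.singleton_subset_iff.mpr hw)
      (Set.disjoint_singleton_left.mpr hwcore)
  · refine ⟨imin, ?_⟩
    simpa using h.ncard_add_le_card_bag (W := ∅)
      (h.XC_union_XTRset_subset_bag ht (t.anc_refl imin) h.anc_imax_imin) (Set.empty_subset _)
      (Set.empty_disjoint _)

end RespectsAtND

theorem width_ge_locpw_general {V ι : Type} [DecidableEq V] [Fintype ι]
    (G : SimpleGraph V) (C : Set V)
    (Q : TDQuint V)
    (t : RootedTreeDecomp V ι G) (ht : t.IsNicePath)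
    (hresp : ∃ imin imax, RespectsAtND t C Q imin imax) :
    locpw G C Q ≤ t.width := by
  obtain ⟨imin, imax, h⟩ := hresp
  obtain ⟨iL, hL⟩ := h.exists_ncard_XLset_le ht
  obtain ⟨iR, hR⟩ := h.exists_ncard_XRset_le ht
  obtain ⟨iε, hε⟩ := h.exists_epsP_le ht
  have := t.sub_one_le_width iL hL
  have := t.sub_one_le_width iR hR
  have := t.sub_one_le_width iε hε
  unfold locpw
  omega

theorem width_ge_locpw {V ι : Type} [Fintype V] [DecidableEq V] [Fintype ι]
    (G : SimpleGraph V) (C : Set V) (hC : IsVertexCover G C)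
    (Q : TDQuint V) (hQ : ValidQuintP G C Q)
    (t : RootedTreeDecomp V ι G) (ht : t.IsNicePath)
    (hresp : ∃ imin imax, RespectsAtND t C Q imin imax) :
    locpw G C Q ≤ t.width :=
  width_ge_locpw_general G C Q t ht hresp
end

section
/- Let G=(V,E) be a graph and C⊆V a set such that S=V∖C is a clique in G. Then pw(G) = min_{L⊆C} max{ pw(G[N[L]]; N(L)), pw(G[N[R]]; N(R)), |S∪N(L)|−1 }, where for each L⊆C we set R = C∖N[L], G[W] denotes the subgraph of G induced by W, and the neighborhoods N(·), N[·] are taken in G. -/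
/-- A (finite, unrooted) tree decomposition of a graph `G` with node set `ι`. -/
structure TreeDecomp (V ι : Type) (G : SimpleGraph V) where
  tree : SimpleGraph ι
  tree_isTree : tree.IsTree
  bag : ι → Finset V
  bag_cover : ∀ v, ∃ i, v ∈ bag i
  bag_edge : ∀ u v, G.Adj u v → ∃ i, u ∈ bag i ∧ v ∈ bag i
  bag_conn : ∀ v : V, (SimpleGraph.induce {i | v ∈ bag i} tree).Connected

/-- The width of a tree decomposition: maximum bag size minus one. -/
def TreeDecomp.width {V ι : Type} [Fintype ι] {G : SimpleGraph V}
    (d : TreeDecomp V ι G) : ℕ :=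
  (Finset.univ.sup fun i => (d.bag i).card) - 1

/-- The treewidth of `G`: minimum width over all tree decompositions of `G`. -/
noncomputable def treewidth {V : Type} (G : SimpleGraph V) : ℕ :=
  sInf {w | ∃ (ι : Type) (inst : Fintype ι) (d : TreeDecomp V ι G),
    @TreeDecomp.width V ι inst G d ≤ w}

/-- A path decomposition of `G` with bags indexed by `Fin n`. -/
structure PathDecomp {V : Type} (G : SimpleGraph V) (n : ℕ) where
  bag : Fin n → Finset V
  bag_cover : ∀ v, ∃ i, v ∈ bag i
  bag_edge : ∀ u v, G.Adj u v → ∃ i, u ∈ bag i ∧ v ∈ bag i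
  bag_conv : ∀ i j k : Fin n, i ≤ j → j ≤ k → ∀ v, v ∈ bag i → v ∈ bag k → v ∈ bag j

/-- The width of a path decomposition: maximum bag size minus one. -/
def PathDecomp.width {V : Type} {G : SimpleGraph V} {n : ℕ} (d : PathDecomp G n) : ℕ :=
  (Finset.univ.sup fun i => (d.bag i).card) - 1

/-- The pathwidth of `G`: minimum width over all path decompositions of `G`. -/
noncomputable def pathwidth {V : Type} (G : SimpleGraph V) : ℕ :=
  sInf {w | ∃ (n : ℕ) (d : PathDecomp G n), d.width ≤ w}

/-- `pw(G; W)`: minimum width over all path decompositions of `G` having `W` as an end bag. -/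
noncomputable def pathwidthEnd {V : Type} (G : SimpleGraph V) (W : Set V) : ℕ :=
  sInf {w | ∃ (n : ℕ) (d : PathDecomp G (n + 1)),
    (↑(d.bag (Fin.last n)) : Set V) = W ∧ d.width ≤ w}

/-- The (open) neighbourhood `N(W)` of a set of vertices. -/
def nbhd {V : Type} (G : SimpleGraph V) (W : Set V) : Set V :=
  {u | u ∉ W ∧ ∃ v ∈ W, G.Adj v u}

/-- The closed neighbourhood `N[W]` of a set of vertices. -/
def closedNbhd {V : Type} (G : SimpleGraph V) (W : Set V) : Set V :=
  nbhd G W ∪ W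

/-!
Given `L ⊆ C` with `R = C \ N[L]`, a decomposition of `G[N[L]]` ending in `N(L)`, the bag
`S ∪ N(L)`, and the reverse of a decomposition of `G[N[R]]` ending in `N(R)` concatenate to a
path decomposition of `G`: every edge lies in one of the three pieces, and consecutive pieces
meet only in `N(L)` and in `N(R) ⊆ S ∪ N(L)`. Conversely, the clique `S` lies in some bag `B_t`
of an optimal decomposition. Let `L` be the vertices of `C` occurring only before `t`; then
`N(L)`, `N(R)` and `S` lie in `B_t`, and the bags up to `t`, restricted to `N[L]` and followed by
`N(L)`, as well as the bags from `t` on, reversed, restricted to `N[R]` and followed by `N(R)`,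
are decompositions of the required kind.
-/
section

open scoped Classical

noncomputable section

variable {V : Type} {G : SimpleGraph V}

/-- A path decomposition of `G.induce X` whose bags are kept as sets of vertices of `G`, so that
decompositions of different induced subgraphs can be concatenated. -/
structure IsPathDecompOn (G : SimpleGraph V) (X : Set V) {n : ℕ} (bag : Fin n → Finset V) :
    Prop where
  subset : ∀ i, ↑(bag i) ⊆ X
  cover : ∀ v ∈ X, ∃ i, v ∈ bag i
  edge : ∀ u ∈ X, ∀ v ∈ X, G.Adj u v → ∃ i, u ∈ bag i ∧ v ∈ bag i
  conv : ∀ i j k : Fin n, i ≤ j → j ≤ k → ∀ v, v ∈ bag i → v ∈ bag k → v ∈ bag j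

theorem PathDecomp.width_le_iff {n w : ℕ} (d : PathDecomp G n) :
    d.width ≤ w ↔ ∀ i, (d.bag i).card ≤ w + 1 := by
  simp [PathDecomp.width, Finset.sup_le_iff]

theorem PathDecomp.isPathDecompOn {n : ℕ} (d : PathDecomp G n) :
    IsPathDecompOn G Set.univ d.bag where
  subset _ := Set.subset_univ _
  cover v _ := d.bag_cover v
  edge u _ v _ := d.bag_edge u v
  conv := d.bag_conv

theorem PathDecomp.isPathDecompOn_map {X : Set V} {n : ℕ} (d : PathDecomp (G.induce X) n) :
    IsPathDecompOn G X fun i => (d.bag i).map (Function.Embedding.subtype _) where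
  subset i := by simp
  cover v hv := (d.bag_cover ⟨v, hv⟩).imp fun _ => Finset.mem_map_of_mem _
  edge u hu v hv huv := (d.bag_edge ⟨u, hu⟩ ⟨v, hv⟩ huv).imp fun _ h =>
    ⟨Finset.mem_map_of_mem _ h.1, Finset.mem_map_of_mem _ h.2⟩
  conv i j k hij hjk v := by
    simp only [Finset.mem_map, Function.Embedding.coe_subtype]
    rintro ⟨x, hx, rfl⟩ ⟨y, hy, hyx⟩
    cases Subtype.ext hyx
    exact ⟨x, d.bag_conv i j k hij hjk x hx hy, rfl⟩

namespace IsPathDecompOn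

variable {X Y : Set V} {m n : ℕ} {bag : Fin n → Finset V}

theorem single [Fintype V] (X : Set V) : IsPathDecompOn G X ![X.toFinset] where
  subset _ := by simp
  cover v hv := ⟨0, by simpa⟩
  edge u hu v hv _ := ⟨0, by simpa using hu, by simpa using hv⟩
  conv i j k _ _ v := by simp

theorem rev (h : IsPathDecompOn G X bag) : IsPathDecompOn G X (bag ∘ Fin.rev) where
  subset i := h.subset _
  cover v hv := (h.cover v hv).elim fun i hi => ⟨i.rev, by simpa⟩
  edge u hu v hv huv := (h.edge u hu v hv huv).elim fun i hi => ⟨i.rev, by simpa⟩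
  conv i j k hij hjk v hi hk :=
    h.conv k.rev j.rev i.rev (Fin.rev_le_rev.mpr hjk) (Fin.rev_le_rev.mpr hij) v hk hi

theorem conv_append {f : Fin (m + 1) → Finset V} {g : Fin (n + 1) → Finset V}
    (hf : IsPathDecompOn G X f) (hg : IsPathDecompOn G Y g)
    (hXY : ∀ v ∈ X, v ∈ Y → v ∈ f (Fin.last m) ∧ v ∈ g 0) (i j k : Fin (m + 1 + (n + 1)))
    (hij : i ≤ j) (hjk : j ≤ k) (v : V) (hi : v ∈ Fin.append f g i)
    (hk : v ∈ Fin.append f g k) : v ∈ Fin.append f g j := by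
  induction i using Fin.addCases with
  | left i =>
    induction k using Fin.addCases with
    | left k =>
      induction j using Fin.addCases with
      | left j => simpa using hf.conv i j k hij hjk v (by simpa using hi) (by simpa using hk)
      | right j => simp [Fin.le_def] at hjk; omega
    | right k =>
      simp only [Fin.append_left, Fin.append_right] at hi hk
      obtain ⟨hfl, hg0⟩ := hXY v (hf.subset i hi) (hg.subset k hk)
      induction j using Fin.addCases with
      | left j => simpa using hf.conv i j _ hij (Fin.le_last j) v hi hfl
      | right j => simpa using hg.conv 0 j k (Fin.zero_le j) (by simpa using hjk) v hg0 hk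
  | right i =>
    induction k using Fin.addCases with
    | left k => simp [Fin.le_def] at hij hjk; omega
    | right k =>
      induction j using Fin.addCases with
      | left j => simp [Fin.le_def] at hij; omega
      | right j =>
        simpa using hg.conv i j k (by simpa using hij) (by simpa using hjk) v
          (by simpa using hi) (by simpa using hk)

theorem append {f : Fin (m + 1) → Finset V} {g : Fin (n + 1) → Finset V}
    (hf : IsPathDecompOn G X f) (hg : IsPathDecompOn G Y g)
    (hedge : ∀ u ∈ X ∪ Y, ∀ v ∈ X ∪ Y, G.Adj u v → (u ∈ X ∧ v ∈ X) ∨ (u ∈ Y ∧ v ∈ Y))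
    (hXY : ∀ v ∈ X, v ∈ Y → v ∈ f (Fin.last m) ∧ v ∈ g 0) :
    IsPathDecompOn G (X ∪ Y) (Fin.append f g) where
  subset := by
    refine (Fin.forall_fin_add _).mpr ⟨fun i => ?_, fun j => ?_⟩
    · simpa using (hf.subset i).trans Set.subset_union_left
    · simpa using (hg.subset j).trans Set.subset_union_right
  cover := by
    rintro v (hv | hv)
    · obtain ⟨i, hi⟩ := hf.cover v hv
      exact ⟨Fin.castAdd _ i, by simpa⟩
    · obtain ⟨j, hj⟩ := hg.cover v hv
      exact ⟨Fin.natAdd _ j, by simpa⟩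
  edge u hu v hv huv := by
    rcases hedge u hu v hv huv with ⟨hu, hv⟩ | ⟨hu, hv⟩
    · obtain ⟨i, hi⟩ := hf.edge u hu v hv huv
      exact ⟨Fin.castAdd _ i, by simpa⟩
    · obtain ⟨j, hj⟩ := hg.edge u hu v hv huv
      exact ⟨Fin.natAdd _ j, by simpa⟩
  conv := conv_append hf hg hXY

def toPathDecomp (h : IsPathDecompOn G X bag) : PathDecomp (G.induce X) n where
  bag i := (bag i).subtype (· ∈ X)
  bag_cover v := (h.cover v v.2).imp fun _ => Finset.mem_subtype.mpr
  bag_edge u v huv := (h.edge u u.2 v v.2 huv).imp fun _ hi =>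
    ⟨Finset.mem_subtype.mpr hi.1, Finset.mem_subtype.mpr hi.2⟩
  bag_conv i j k hij hjk v hi hk := Finset.mem_subtype.mpr <|
    h.conv i j k hij hjk v (Finset.mem_subtype.mp hi) (Finset.mem_subtype.mp hk)

theorem coe_toPathDecomp_bag (h : IsPathDecompOn G X bag) (i : Fin n) :
    (↑(h.toPathDecomp.bag i) : Set ↥X) = {x : ↥X | ↑x ∈ bag i} := by
  ext x
  simp [toPathDecomp]

theorem toPathDecomp_width_le {w : ℕ} (h : IsPathDecompOn G X bag)
    (hw : ∀ i, (bag i).card ≤ w + 1) : h.toPathDecomp.width ≤ w :=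
  h.toPathDecomp.width_le_iff.mpr fun i => by
    simpa [toPathDecomp, Finset.card_subtype] using (Finset.card_filter_le _ _).trans (hw i)

def pathDecomp (h : IsPathDecompOn G Set.univ bag) : PathDecomp G n :=
  ⟨bag, fun v => h.cover v trivial, fun u v => h.edge u trivial v trivial, h.conv⟩

end IsPathDecompOn

theorem pathwidth_le_width {n : ℕ} (d : PathDecomp G n) : pathwidth G ≤ d.width :=
  Nat.sInf_le ⟨n, d, le_rfl⟩

theorem pathwidthEnd_le_width {W : Set V} {n : ℕ} (d : PathDecomp G (n + 1))
    (h : ↑(d.bag (Fin.last n)) = W) : pathwidthEnd G W ≤ d.width :=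
  Nat.sInf_le ⟨n, d, h, le_rfl⟩

theorem exists_pathDecomp_width_le_pathwidth [Fintype V] (G : SimpleGraph V) :
    ∃ n, ∃ d : PathDecomp G (n + 1), d.width ≤ pathwidth G := by
  obtain ⟨n, d, hd⟩ := Nat.sInf_mem (s := {w | ∃ n, ∃ d : PathDecomp G n, d.width ≤ w})
    ⟨_, 1, (IsPathDecompOn.single (G := G) Set.univ).pathDecomp, le_rfl⟩
  cases n with
  | succ n => exact ⟨n, d, hd⟩
  | zero =>
    have : IsEmpty V := ⟨fun v => (d.bag_cover v).elim fun i _ => i.elim0⟩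
    exact ⟨0, (IsPathDecompOn.single Set.univ).pathDecomp,
      by simp [PathDecomp.width, IsPathDecompOn.pathDecomp]⟩

theorem exists_pathDecomp_width_le_pathwidthEnd [Fintype V] (G : SimpleGraph V) (W : Set V) :
    ∃ n, ∃ d : PathDecomp G (n + 1),
      ↑(d.bag (Fin.last n)) = W ∧ d.width ≤ pathwidthEnd G W := by
  have h := (IsPathDecompOn.single (G := G) Set.univ).append (IsPathDecompOn.single W)
    (by simp) (by simp)
  rw [Set.univ_union] at h
  refine Nat.sInf_mem (s := {w | ∃ n, ∃ d : PathDecomp G (n + 1),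
    ↑(d.bag (Fin.last n)) = W ∧ d.width ≤ w}) ⟨_, 1, h.pathDecomp, ?_, le_rfl⟩
  simp [IsPathDecompOn.pathDecomp, Fin.append_right_eq_snoc]

namespace PathDecomp

variable {n : ℕ}

def rev (d : PathDecomp G n) : PathDecomp G n :=
  d.isPathDecompOn.rev.pathDecomp

@[simp]
theorem rev_bag (d : PathDecomp G n) (i : Fin n) : d.rev.bag i = d.bag i.rev :=
  rfl

theorem card_bag_le_width_add_one (d : PathDecomp G n) (i : Fin n) :
    (d.bag i).card ≤ d.width + 1 :=
  d.width_le_iff.mp le_rfl i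

theorem width_rev_le (d : PathDecomp G n) : d.rev.width ≤ d.width :=
  d.rev.width_le_iff.mpr fun i => d.card_bag_le_width_add_one i.rev

/-- The Helly property of intervals: the bag where the last-starting vertex of a clique first
appears contains the whole clique. -/
theorem exists_clique_subset_bag [Finite V] (d : PathDecomp G (n + 1)) {S : Set V}
    (hS : G.IsClique S) : ∃ t, S ⊆ d.bag t := by
  choose first hfirst hfirst_le using fun v =>
    Set.exists_min_image {i | v ∈ d.bag i} id (Set.toFinite _) (d.bag_cover v)
  rcases S.eq_empty_or_nonempty with rfl | hne
  · exact ⟨0, Set.empty_subset _⟩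
  obtain ⟨u, hu, hmax⟩ := Set.exists_max_image S first (Set.toFinite S) hne
  refine ⟨first u, fun v hv => ?_⟩
  obtain ⟨j, huj, hvj⟩ : ∃ j, u ∈ d.bag j ∧ v ∈ d.bag j := by
    rcases eq_or_ne u v with rfl | huv
    · exact ⟨_, hfirst u, hfirst u⟩
    · exact d.bag_edge u v (hS hu hv huv)
  exact d.bag_conv (first v) (first u) j (hmax v hv) (hfirst_le u j huj) v (hfirst v) hvj

theorem pathwidthEnd_induce_le_of_prefix [Fintype V] (d : PathDecomp G n) (t : Fin n)
    {A W : Set V} (hWA : W ⊆ A) (hWt : W ⊆ d.bag t) (hcover : ∀ v ∈ A, ∃ i ≤ t, v ∈ d.bag i)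
    (hlate : ∀ v ∈ A, ∀ i, t ≤ i → v ∈ d.bag i → v ∈ d.bag t) :
    pathwidthEnd (G.induce A) {x | ↑x ∈ W} ≤ d.width := by
  set b : Fin (t + 1) → Finset V := fun i => (d.bag (Fin.castLE t.isLt i)).filter (· ∈ A)
  have hlast : Fin.castLE t.isLt (Fin.last t) = t := rfl
  have hb : IsPathDecompOn G A b := by
    refine ⟨fun i _ hx => (Finset.mem_filter.mp hx).2, fun v hv => ?_, fun u hu v hv huv => ?_, ?_⟩
    · obtain ⟨i, hit, hi⟩ := hcover v hv
      exact ⟨⟨i, by omega⟩, by simp [b, hi, hv]⟩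
    · obtain ⟨i, hui, hvi⟩ := d.bag_edge u v huv
      by_cases hit : i ≤ t
      · exact ⟨⟨i, by omega⟩, by simp [b, hui, hu], by simp [b, hvi, hv]⟩
      · refine ⟨Fin.last t, ?_, ?_⟩
        · simpa [b, hu, hlast] using hlate u hu i (le_of_not_ge hit) hui
        · simpa [b, hv, hlast] using hlate v hv i (le_of_not_ge hit) hvi
    · intro i j k hij hjk v
      simp only [b, Finset.mem_filter]
      exact fun hi hk => ⟨d.bag_conv _ _ _ hij hjk v hi.1 hk.1, hi.2⟩
  have h := hb.append (IsPathDecompOn.single W)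
    (fun u hu v hv _ => .inl ⟨Set.union_eq_left.mpr hWA ▸ hu, Set.union_eq_left.mpr hWA ▸ hv⟩)
    (fun v hvA hvW => ⟨by simpa [b, hvA, hlast] using hWt hvW, by simpa using hvW⟩)
  rw [Set.union_eq_left.mpr hWA] at h
  refine (pathwidthEnd_le_width h.toPathDecomp ?_).trans (h.toPathDecomp_width_le ?_)
  · simp [IsPathDecompOn.coe_toPathDecomp_bag, Fin.append_right_eq_snoc]
  · refine (Fin.forall_fin_add _).mpr ⟨fun i => ?_, fun _ => ?_⟩
    · simpa [b] using (Finset.card_filter_le _ _).trans (d.card_bag_le_width_add_one _)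
    · simpa using (Finset.card_le_card (Set.toFinset_subset.mpr hWt)).trans
        (d.card_bag_le_width_add_one t)

theorem pathwidthEnd_induce_le_of_suffix [Fintype V] (d : PathDecomp G n) (t : Fin n)
    {A W : Set V} (hWA : W ⊆ A) (hWt : W ⊆ d.bag t) (hcover : ∀ v ∈ A, ∃ i ≥ t, v ∈ d.bag i)
    (hearly : ∀ v ∈ A, ∀ i ≤ t, v ∈ d.bag i → v ∈ d.bag t) :
    pathwidthEnd (G.induce A) {x | ↑x ∈ W} ≤ d.width := by
  refine (d.rev.pathwidthEnd_induce_le_of_prefix t.rev hWA (by simpa) (fun v hv => ?_)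
    (fun v hv i hi => ?_)).trans d.width_rev_le
  · obtain ⟨i, hti, hi⟩ := hcover v hv
    exact ⟨i.rev, Fin.rev_le_rev.mpr hti, by simpa⟩
  · simpa using hearly v hv i.rev (Fin.rev_le_iff.mpr hi)

end PathDecomp

theorem pathwidth_le_of_glue [Fintype V] {X Y Z P Q : Set V} (hP : X ∩ Y ⊆ P)
    (hQ : (X ∪ Y) ∩ Z ⊆ Y ∩ Q)
    (hXY : ∀ u ∈ X ∪ Y, ∀ v ∈ X ∪ Y, G.Adj u v → (u ∈ X ∧ v ∈ X) ∨ (u ∈ Y ∧ v ∈ Y))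
    (hXYZ : ∀ u v, G.Adj u v → (u ∈ X ∪ Y ∧ v ∈ X ∪ Y) ∨ (u ∈ Z ∧ v ∈ Z))
    (hcover : X ∪ Y ∪ Z = Set.univ) :
    pathwidth G ≤ max (max (pathwidthEnd (G.induce X) {x | ↑x ∈ P})
      (pathwidthEnd (G.induce Z) {x | ↑x ∈ Q})) (Y.ncard - 1) := by
  obtain ⟨m, d₁, hd₁, hw₁⟩ := exists_pathDecomp_width_le_pathwidthEnd (G.induce X) {x | ↑x ∈ P}
  obtain ⟨n, d₂, hd₂, hw₂⟩ := exists_pathDecomp_width_le_pathwidthEnd (G.induce Z) {x | ↑x ∈ Q}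
  have hP' : ∀ v (hv : v ∈ X), v ∈ P → ⟨v, hv⟩ ∈ d₁.bag (Fin.last m) := fun v hv hvP =>
    (Set.ext_iff.mp hd₁ ⟨v, hv⟩).mpr hvP
  have hQ' : ∀ v (hv : v ∈ Z), v ∈ Q → ⟨v, hv⟩ ∈ d₂.bag (Fin.last n) := fun v hv hvQ =>
    (Set.ext_iff.mp hd₂ ⟨v, hv⟩).mpr hvQ
  have hXY' := d₁.isPathDecompOn_map.append (IsPathDecompOn.single Y) hXY fun v hvX hvY =>
    ⟨Finset.mem_map_of_mem _ (hP' v hvX (hP ⟨hvX, hvY⟩)), by simpa⟩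
  have h := hXY'.append d₂.isPathDecompOn_map.rev (fun u _ v _ => hXYZ u v) fun v hv hvZ =>
    ⟨by simpa [Fin.append_right_eq_snoc] using (hQ ⟨hv, hvZ⟩).1,
      by simpa using ⟨hvZ, hQ' v hvZ (hQ ⟨hv, hvZ⟩).2⟩⟩
  rw [hcover] at h
  refine (pathwidth_le_width h.pathDecomp).trans (h.pathDecomp.width_le_iff.mpr ?_)
  have hY : Y.toFinset.card ≤ Y.ncard - 1 + 1 := by
    rw [← Set.ncard_eq_toFinset_card']
    omega
  refine (Fin.forall_fin_add _).mpr
    ⟨(Fin.forall_fin_add _).mpr ⟨fun i => ?_, fun _ => ?_⟩, fun j => ?_⟩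
  · simpa [IsPathDecompOn.pathDecomp] using (d₁.card_bag_le_width_add_one i).trans (by omega)
  · simpa [IsPathDecompOn.pathDecomp] using hY.trans (by omega)
  · simpa [IsPathDecompOn.pathDecomp] using (d₂.card_bag_le_width_add_one _).trans (by omega)

section Neighbourhood

variable {W C L : Set V} {u v : V}

theorem nbhd_subset_closedNbhd : nbhd G W ⊆ closedNbhd G W :=
  Set.subset_union_left

theorem subset_closedNbhd : W ⊆ closedNbhd G W :=
  Set.subset_union_right

theorem mem_closedNbhd_of_adj (hv : v ∈ W) (h : G.Adj v u) : u ∈ closedNbhd G W := by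
  by_cases hu : u ∈ W
  exacts [Or.inr hu, Or.inl ⟨hu, v, hv, h⟩]

theorem nbhd_diff_closedNbhd_subset :
    nbhd G (C \ closedNbhd G L) ⊆ (Set.univ \ C) ∪ nbhd G L := by
  rintro u ⟨huR, r, hrR, hru⟩
  by_cases huC : u ∈ C
  · have huL : u ∉ L := fun huL => hrR.2 (mem_closedNbhd_of_adj huL hru.symm)
    have huN : u ∈ closedNbhd G L := by_contra fun h => huR ⟨huC, h⟩
    exact Or.inr (huN.resolve_right huL)
  · exact Or.inl ⟨trivial, huC⟩

theorem mem_union_of_notMem_diff_closedNbhd (hv : v ∉ C \ closedNbhd G L) :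
    v ∈ closedNbhd G L ∪ ((Set.univ \ C) ∪ nbhd G L) := by
  by_cases hvC : v ∈ C
  · exact Or.inl (by_contra fun h => hv ⟨hvC, h⟩)
  · exact Or.inr (Or.inl ⟨trivial, hvC⟩)

theorem notMem_diff_closedNbhd_of_mem_union
    (hv : v ∈ closedNbhd G L ∪ ((Set.univ \ C) ∪ nbhd G L)) : v ∉ C \ closedNbhd G L := by
  rintro ⟨hvC, hvN⟩
  rcases hv with hv | ⟨-, hv⟩ | hv
  exacts [hvN hv, hv hvC, hvN (nbhd_subset_closedNbhd hv)]

end Neighbourhood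

theorem pathwidth_le_max_of_subset [Fintype V] {C L : Set V} (hL : L ⊆ C) :
    pathwidth G ≤ max (max
      (pathwidthEnd (G.induce (closedNbhd G L)) {x | ↑x ∈ nbhd G L})
      (pathwidthEnd (G.induce (closedNbhd G (C \ closedNbhd G L)))
        {x | ↑x ∈ nbhd G (C \ closedNbhd G L)}))
      (((Set.univ \ C) ∪ nbhd G L).ncard - 1) := by
  have hY : ∀ {u}, u ∈ closedNbhd G L ∪ ((Set.univ \ C) ∪ nbhd G L) → u ∉ L →
      u ∈ (Set.univ \ C) ∪ nbhd G L := by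
    rintro u (hu | hu) huL
    exacts [Or.inr (hu.resolve_right huL), hu]
  refine pathwidth_le_of_glue ?_ ?_ ?_ ?_ ?_
  · rintro v ⟨hvX, ⟨-, hvC⟩ | hvN⟩
    exacts [hvX.resolve_right fun hvL => hvC (hL hvL), hvN]
  · rintro v ⟨hv, hvZ⟩
    have hvN := hvZ.resolve_right (notMem_diff_closedNbhd_of_mem_union hv)
    exact ⟨nbhd_diff_closedNbhd_subset hvN, hvN⟩
  · intro u hu v hv huv
    by_cases huL : u ∈ L
    · exact .inl ⟨subset_closedNbhd huL, mem_closedNbhd_of_adj huL huv⟩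
    by_cases hvL : v ∈ L
    · exact .inl ⟨mem_closedNbhd_of_adj hvL huv.symm, subset_closedNbhd hvL⟩
    exact .inr ⟨hY hu huL, hY hv hvL⟩
  · intro u v huv
    by_cases hu : u ∈ C \ closedNbhd G L
    · exact .inr ⟨subset_closedNbhd hu, mem_closedNbhd_of_adj hu huv⟩
    by_cases hv : v ∈ C \ closedNbhd G L
    · exact .inr ⟨mem_closedNbhd_of_adj hv huv.symm, subset_closedNbhd hv⟩
    exact .inl ⟨mem_union_of_notMem_diff_closedNbhd hu, mem_union_of_notMem_diff_closedNbhd hv⟩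
  · refine Set.eq_univ_of_forall fun v => ?_
    by_cases hv : v ∈ C \ closedNbhd G L
    exacts [Or.inr (subset_closedNbhd hv), Or.inl (mem_union_of_notMem_diff_closedNbhd hv)]

namespace PathDecomp

variable {n : ℕ} (d : PathDecomp G n) {C : Set V} {t : Fin n}

def vertsBefore (C : Set V) (t : Fin n) : Set V :=
  {v | v ∈ C ∧ ∀ i, v ∈ d.bag i → i < t}

theorem vertsBefore_subset : d.vertsBefore C t ⊆ C :=
  fun _ hv => hv.1

theorem exists_ge_of_notMem_vertsBefore {v : V} (hvC : v ∈ C) (hv : v ∉ d.vertsBefore C t) :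
    ∃ i ≥ t, v ∈ d.bag i := by
  simpa [vertsBefore, hvC, and_comm] using hv

variable {d}

theorem nbhd_vertsBefore_subset_bag (hSt : Set.univ \ C ⊆ d.bag t) :
    nbhd G (d.vertsBefore C t) ⊆ d.bag t := by
  rintro u ⟨huL, w, hwL, hwu⟩
  by_cases huC : u ∈ C
  · obtain ⟨i, hwi, hui⟩ := d.bag_edge w u hwu
    obtain ⟨j, htj, huj⟩ := d.exists_ge_of_notMem_vertsBefore huC huL
    exact d.bag_conv i t j (hwL.2 i hwi).le htj u hui huj
  · exact hSt ⟨trivial, huC⟩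

theorem ncard_sub_one_le_width (hSt : Set.univ \ C ⊆ d.bag t) :
    ((Set.univ \ C) ∪ nbhd G (d.vertsBefore C t)).ncard - 1 ≤ d.width := by
  have h := Set.ncard_le_ncard (Set.union_subset hSt (nbhd_vertsBefore_subset_bag hSt))
  rw [Set.ncard_coe_finset] at h
  have := d.card_bag_le_width_add_one t
  omega

theorem pathwidthEnd_closedNbhd_vertsBefore_le [Fintype V] (hSt : Set.univ \ C ⊆ d.bag t) :
    pathwidthEnd (G.induce (closedNbhd G (d.vertsBefore C t)))
      {x | ↑x ∈ nbhd G (d.vertsBefore C t)} ≤ d.width := by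
  refine d.pathwidthEnd_induce_le_of_prefix t nbhd_subset_closedNbhd
    (nbhd_vertsBefore_subset_bag hSt) (fun v hv => ?_) (fun v hv i hti hvi => ?_)
  · rcases hv with hv | hv
    · exact ⟨t, le_rfl, nbhd_vertsBefore_subset_bag hSt hv⟩
    · obtain ⟨i, hi⟩ := d.bag_cover v
      exact ⟨i, (hv.2 i hi).le, hi⟩
  · refine nbhd_vertsBefore_subset_bag hSt (hv.resolve_right fun hvL => ?_)
    exact absurd (hvL.2 i hvi) (not_lt.mpr hti)

theorem pathwidthEnd_closedNbhd_diff_le [Fintype V] (hSt : Set.univ \ C ⊆ d.bag t) :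
    pathwidthEnd (G.induce (closedNbhd G (C \ closedNbhd G (d.vertsBefore C t))))
      {x | ↑x ∈ nbhd G (C \ closedNbhd G (d.vertsBefore C t))} ≤ d.width := by
  have hN : nbhd G (C \ closedNbhd G (d.vertsBefore C t)) ⊆ d.bag t :=
    nbhd_diff_closedNbhd_subset.trans (Set.union_subset hSt (nbhd_vertsBefore_subset_bag hSt))
  have hR : ∀ v ∈ C \ closedNbhd G (d.vertsBefore C t), ∃ i ≥ t, v ∈ d.bag i :=
    fun v hv => d.exists_ge_of_notMem_vertsBefore hv.1 fun hvL => hv.2 (subset_closedNbhd hvL)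
  refine d.pathwidthEnd_induce_le_of_suffix t nbhd_subset_closedNbhd hN
    (fun v hv => ?_) (fun v hv i hit hvi => ?_)
  · rcases hv with hv | hv
    exacts [⟨t, le_rfl, hN hv⟩, hR v hv]
  · rcases hv with hv | hv
    · exact hN hv
    · obtain ⟨j, htj, hvj⟩ := hR v hv
      exact d.bag_conv i t j hit htj v hvi hvj

end PathDecomp

theorem exists_subset_max_le_pathwidth [Fintype V] {C : Set V} (hS : G.IsClique (Set.univ \ C)) :
    ∃ L ⊆ C, max (max
      (pathwidthEnd (G.induce (closedNbhd G L)) {x | ↑x ∈ nbhd G L})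
      (pathwidthEnd (G.induce (closedNbhd G (C \ closedNbhd G L)))
        {x | ↑x ∈ nbhd G (C \ closedNbhd G L)}))
      (((Set.univ \ C) ∪ nbhd G L).ncard - 1) ≤ pathwidth G := by
  obtain ⟨n, d, hd⟩ := exists_pathDecomp_width_le_pathwidth G
  obtain ⟨t, ht⟩ := d.exists_clique_subset_bag hS
  refine ⟨d.vertsBefore C t, d.vertsBefore_subset, le_trans ?_ hd⟩
  exact max_le (max_le (PathDecomp.pathwidthEnd_closedNbhd_vertsBefore_le ht)
    (PathDecomp.pathwidthEnd_closedNbhd_diff_le ht)) (PathDecomp.ncard_sub_one_le_width ht)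

end

end

theorem pathwidth_eq_min_over_subsets_general {V : Type} [Fintype V]
    (G : SimpleGraph V) (C : Set V) (hS : G.IsClique (Set.univ \ C)) :
    pathwidth G = sInf {m | ∃ L : Set V, L ⊆ C ∧
      m = max (max
        (pathwidthEnd (G.induce (closedNbhd G L))
          {x : ↥(closedNbhd G L) | ↑x ∈ nbhd G L})
        (pathwidthEnd (G.induce (closedNbhd G (C \ closedNbhd G L)))
          {x : ↥(closedNbhd G (C \ closedNbhd G L)) | ↑x ∈ nbhd G (C \ closedNbhd G L)}))
        (((Set.univ \ C) ∪ nbhd G L).ncard - 1)} := by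
  apply le_antisymm
  · refine le_csInf ?_ ?_
    · exact ⟨_, ∅, Set.empty_subset C, rfl⟩
    · rintro m ⟨L, hL, rfl⟩
      exact pathwidth_le_max_of_subset hL
  · obtain ⟨L, hL, hle⟩ := exists_subset_max_le_pathwidth hS
    exact le_trans (Nat.sInf_le ⟨L, hL, rfl⟩) hle

theorem pathwidth_eq_min_over_subsets {V : Type} [Fintype V] [DecidableEq V]
    (G : SimpleGraph V) (C : Set V) (hS : G.IsClique (Set.univ \ C)) :
    pathwidth G = sInf {m | ∃ L : Set V, L ⊆ C ∧
      m = max (max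
        (pathwidthEnd (G.induce (closedNbhd G L))
          {x : ↥(closedNbhd G L) | ↑x ∈ nbhd G L})
        (pathwidthEnd (G.induce (closedNbhd G (C \ closedNbhd G L)))
          {x : ↥(closedNbhd G (C \ closedNbhd G L)) | ↑x ∈ nbhd G (C \ closedNbhd G L)}))
        (((Set.univ \ C) ∪ nbhd G L).ncard - 1)} :=
  pathwidth_eq_min_over_subsets_general G C hS
end
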